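/- arXiv:1412.3334 — 3 statements merged into one kernel-verified Lean document; each statement's English description precedes it below -/
import Mathlib

section
/- In the competitive diffusion game on an unweighted path P with n vertices, P admits κ = 2 players with boundary t (a positive integer) if and only if 2t ≤ n ≤ 2t + 2. -/
open Classical

noncomputable section

/-- State labels in the competitive diffusion game:
`none` = free (undominated, non-neutral), `some none` = neutral,
`some (some i)` = dominated by player `i`. -/
def initLabel {V : Type*} {k : ℕ} (s : Fin k → V) (v : V) : Option (Option (Fin k)) :=
  if h : ∃! i, s i = v then some (some h.choose)
  else if _h : (∃ i, s i = v) then some none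
  else none

/-- One diffusion step: a free vertex adjacent to vertices dominated by exactly one
player becomes dominated by that player; if adjacent to vertices dominated by two or
more players it becomes neutral. -/
def stepLabel {V : Type*} {k : ℕ} (G : SimpleGraph V) (L : V → Option (Option (Fin k)))
    (v : V) : Option (Option (Fin k)) :=
  match L v with
  | some x => some x
  | none =>
    if h : ∃! i : Fin k, ∃ u, G.Adj u v ∧ L u = some (some i) then some (some h.choose)
    else if _h : (∃ i : Fin k, ∃ u, G.Adj u v ∧ L u = some (some i)) then some none
    else none

/-- The final state of the diffusion process (it stabilizes after `|V|` steps). -/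
def finalLabel {V : Type*} [Fintype V] {k : ℕ} (G : SimpleGraph V) (s : Fin k → V) :
    V → Option (Option (Fin k)) :=
  (fun L v => stepLabel G L v)^[Fintype.card V] (initLabel s)

/-- The utility of player `i`: total weight of the vertices `i` dominates at the end. -/
def utility {V : Type*} [Fintype V] {k : ℕ} (G : SimpleGraph V) (w : V → ℤ)
    (s : Fin k → V) (i : Fin k) : ℤ :=
  ∑ v ∈ Finset.univ.filter (fun v => finalLabel G s v = some (some i)), w v

/-- `s` is a pure Nash equilibrium of the competitive diffusion game `(k, G, w)`. -/
def isNash {V : Type*} [Fintype V] [DecidableEq V] {k : ℕ} (G : SimpleGraph V) (w : V → ℤ)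
    (s : Fin k → V) : Prop :=
  ∀ (i : Fin k) (v' : V), utility G w (Function.update s i v') i ≤ utility G w s i

/-- `G` with weights `w` admits `κ` players with boundary `t`: some pure Nash
equilibrium `s` of `(κ, G, w)` satisfies `ν(s) ≤ t ≤ μ(s)`. -/
def admitsWith {V : Type*} [Fintype V] [DecidableEq V] (G : SimpleGraph V) (w : V → ℤ)
    (κ : ℕ) (t : ℤ) : Prop :=
  ∃ s : Fin κ → V, isNash G w s ∧
    (∀ v : V, utility G w (Fin.snoc s v) (Fin.last κ) ≤ t) ∧
    (∀ i : Fin κ, t ≤ utility G w s i)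

/-- The path on `n` vertices. -/
def pathGraph (n : ℕ) : SimpleGraph (Fin n) :=
  SimpleGraph.fromRel (fun i j => (i : ℕ) + 1 = (j : ℕ))

/-- The unweighted path on `n` vertices admits `κ` players with boundary `t`. -/
def pathAdmits (n κ t : ℕ) : Prop :=
  admitsWith (pathGraph n) (fun _ => (1 : ℤ)) κ (t : ℤ)

namespace PathProof
open Finset

lemma natDist_def (a b : ℕ) : Nat.dist a b = (a - b) + (b - a) := rfl

lemma path_adj {n : ℕ} {u v : Fin n} :
    (pathGraph n).Adj u v ↔ ((u : ℕ) + 1 = (v : ℕ) ∨ (v : ℕ) + 1 = (u : ℕ)) := by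
  unfold pathGraph
  rw [SimpleGraph.fromRel_adj]
  constructor
  · rintro ⟨-, h⟩; exact h
  · intro h
    refine ⟨?_, h⟩
    intro hv
    rw [hv] at h
    omega

lemma stepLabel_some {V : Type*} {k : ℕ} {G : SimpleGraph V} {L : V → Option (Option (Fin k))}
    {v : V} {x : Option (Fin k)} (h : L v = some x) : stepLabel G L v = some x := by
  unfold stepLabel; rw [h]

lemma stepLabel_none {V : Type*} {k : ℕ} {G : SimpleGraph V} {L : V → Option (Option (Fin k))}
    {v : V} (h : L v = none) :
    stepLabel G L v =
      if h : ∃! i : Fin k, ∃ u, G.Adj u v ∧ L u = some (some i) then some (some h.choose)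
      else if _h : (∃ i : Fin k, ∃ u, G.Adj u v ∧ L u = some (some i)) then some none
      else none := by
  unfold stepLabel; rw [h]

def lab {n k : ℕ} (s : Fin k → Fin n) (m : ℕ) : Fin n → Option (Option (Fin k)) :=
  (fun L v => stepLabel (pathGraph n) L v)^[m] (initLabel s)

lemma lab_zero {n k : ℕ} (s : Fin k → Fin n) : lab s 0 = initLabel s := rfl

lemma lab_succ {n k : ℕ} (s : Fin k → Fin n) (m : ℕ) :
    lab s (m + 1) = fun v => stepLabel (pathGraph n) (lab s m) v :=
  Function.iterate_succ_apply' _ _ _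

theorem master {n k : ℕ} (s : Fin k → Fin n) (hs : Function.Injective s) :
    ∀ (m : ℕ) (v : Fin n),
      (lab s m v = none ↔ ∀ i, m < Nat.dist (s i : ℕ) (v : ℕ)) ∧
      (∀ i, lab s m v = some (some i) ↔
        (Nat.dist (s i : ℕ) (v : ℕ) ≤ m ∧
          ∀ j, j ≠ i → Nat.dist (s i : ℕ) (v : ℕ) < Nat.dist (s j : ℕ) (v : ℕ))) := by
  intro m
  induction m with
  | zero =>
    intro v
    have hiff : ∀ i : Fin k, (Nat.dist (s i : ℕ) (v : ℕ) ≤ 0 ↔ s i = v) := by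
      intro i
      rw [← Fin.val_inj]
      simp only [natDist_def]
      omega
    constructor
    · show initLabel s v = none ↔ _
      unfold initLabel
      by_cases hex : ∃ i, s i = v
      · obtain ⟨i0, hi0⟩ := hex
        have hu : ∃! i, s i = v := ⟨i0, hi0, fun j hj => hs (hj.trans hi0.symm)⟩
        rw [dif_pos hu]
        constructor
        · intro h; simp at h
        · intro h
          have h1 := h i0
          have h2 : Nat.dist (s i0 : ℕ) (v : ℕ) ≤ 0 := (hiff i0).mpr hi0
          omega
      · rw [dif_neg (fun hu : ∃! i, s i = v => hex hu.exists), dif_neg hex]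
        constructor
        · intro _ i
          have : ¬ (Nat.dist (s i : ℕ) (v : ℕ) ≤ 0) := fun hle => hex ⟨i, (hiff i).mp hle⟩
          omega
        · intro _; rfl
    · intro i
      show initLabel s v = some (some i) ↔ _
      unfold initLabel
      by_cases hex : ∃ j, s j = v
      · obtain ⟨i0, hi0⟩ := hex
        have hu : ∃! j, s j = v := ⟨i0, hi0, fun j hj => hs (hj.trans hi0.symm)⟩
        rw [dif_pos hu]
        constructor
        · intro h
          have hc : hu.choose = i := by simpa using h
          have hsi : s i = v := hc ▸ hu.choose_spec.1
          refine ⟨(hiff i).mpr hsi, ?_⟩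
          intro j hj
          have h1 : Nat.dist (s i : ℕ) (v : ℕ) ≤ 0 := (hiff i).mpr hsi
          have h2 : s j ≠ v := fun hjv => hj (hs (hjv.trans hsi.symm))
          have h3 : ¬ Nat.dist (s j : ℕ) (v : ℕ) ≤ 0 := fun hle => h2 ((hiff j).mp hle)
          omega
        · rintro ⟨hle, -⟩
          have hsi : s i = v := (hiff i).mp hle
          have hc : hu.choose = i := hs (hu.choose_spec.1.trans hsi.symm)
          rw [hc]
      · rw [dif_neg (fun hu : ∃! j, s j = v => hex hu.exists), dif_neg hex]
        constructor
        · intro h; simp at h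
        · rintro ⟨hle, -⟩; exact absurd ⟨i, (hiff i).mp hle⟩ hex
  | succ m IH =>
    intro v
    have hstep : lab s (m + 1) v = stepLabel (pathGraph n) (lab s m) v := by
      rw [lab_succ]
    by_cases hcase : ∀ i, m < Nat.dist (s i : ℕ) (v : ℕ)
    · -- all players still far: previous label is none
      have hnone : lab s m v = none := ((IH v).1).mpr hcase
      have hkey : ∀ i : Fin k,
          (∃ u, (pathGraph n).Adj u v ∧ lab s m u = some (some i)) ↔
            Nat.dist (s i : ℕ) (v : ℕ) = m + 1 := by
        intro i
        constructor
        · rintro ⟨u, hadj, hu⟩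
          rw [(IH u).2 i] at hu
          rw [path_adj] at hadj
          have h3 := hcase i
          obtain ⟨h1, -⟩ := hu
          simp only [natDist_def] at h1 h3 ⊢
          omega
        · intro hd
          have hne : (s i : ℕ) ≠ (v : ℕ) := by
            simp only [natDist_def] at hd; omega
          rcases Nat.lt_or_ge (s i : ℕ) (v : ℕ) with hlt | hge
          · have hv1 : (v : ℕ) - 1 < n := by have := v.isLt; omega
            refine ⟨⟨(v : ℕ) - 1, hv1⟩, ?_, ?_⟩
            · rw [path_adj]; left; simp only [Fin.val_mk]; omega
            · rw [(IH _).2 i]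
              constructor
              · show Nat.dist _ _ ≤ m
                simp only [natDist_def, Fin.val_mk] at hd ⊢
                omega
              · intro j hj
                by_contra hle
                push_neg at hle
                have hj1 := hcase j
                have heq : (s j : ℕ) = (s i : ℕ) := by
                  simp only [natDist_def, Fin.val_mk] at hd hle hj1 ⊢
                  omega
                exact hj (hs (Fin.val_injective heq))
          · have hgt : (v : ℕ) < (s i : ℕ) := by omega
            have hv1 : (v : ℕ) + 1 < n := by have := (s i).isLt; omega
            refine ⟨⟨(v : ℕ) + 1, hv1⟩, ?_, ?_⟩
            · rw [path_adj]; right; simp only [Fin.val_mk]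
            · rw [(IH _).2 i]
              constructor
              · show Nat.dist _ _ ≤ m
                simp only [natDist_def, Fin.val_mk] at hd ⊢
                omega
              · intro j hj
                by_contra hle
                push_neg at hle
                have hj1 := hcase j
                have heq : (s j : ℕ) = (s i : ℕ) := by
                  simp only [natDist_def, Fin.val_mk] at hd hle hj1 ⊢
                  omega
                exact hj (hs (Fin.val_injective heq))
      by_cases h1 : ∃! i : Fin k, Nat.dist (s i : ℕ) (v : ℕ) = m + 1
      · have h1' : ∃! i : Fin k, ∃ u, (pathGraph n).Adj u v ∧ lab s m u = some (some i) := by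
          rw [existsUnique_congr hkey]; exact h1
        have hval : lab s (m + 1) v = some (some h1'.choose) := by
          rw [hstep, stepLabel_none hnone, dif_pos h1']
        have hcd : Nat.dist (s h1'.choose : ℕ) (v : ℕ) = m + 1 := (hkey _).mp h1'.choose_spec.1
        refine ⟨?_, ?_⟩
        · rw [hval]
          constructor
          · intro h; simp at h
          · intro h; exact absurd (h h1'.choose) (by omega)
        · intro i
          rw [hval]
          constructor
          · intro h
            have hic : h1'.choose = i := by simpa using h
            subst hic
            refine ⟨by omega, fun j hj => ?_⟩
            have hj2 := hcase j
            have hne : Nat.dist (s j : ℕ) (v : ℕ) ≠ m + 1 := fun hh => hj (h1.unique hh hcd)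
            omega
          · rintro ⟨hle, hstrict⟩
            have hdi : Nat.dist (s i : ℕ) (v : ℕ) = m + 1 := by have := hcase i; omega
            have hic : i = h1'.choose := h1.unique hdi hcd
            rw [← hic]
      · by_cases h2 : ∃ i : Fin k, Nat.dist (s i : ℕ) (v : ℕ) = m + 1
        · have h2' : ∃ i : Fin k, ∃ u, (pathGraph n).Adj u v ∧ lab s m u = some (some i) := by
            obtain ⟨i, hi⟩ := h2; exact ⟨i, (hkey i).mpr hi⟩
          have h1' : ¬ ∃! i : Fin k, ∃ u, (pathGraph n).Adj u v ∧ lab s m u = some (some i) := by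
            intro hh
            exact h1 ((existsUnique_congr hkey).mp hh)
          have hval : lab s (m + 1) v = some none := by
            rw [hstep, stepLabel_none hnone, dif_neg h1', dif_pos h2']
          refine ⟨?_, ?_⟩
          · rw [hval]
            constructor
            · intro h; simp at h
            · intro h
              obtain ⟨i, hi⟩ := h2
              exact absurd (h i) (by omega)
          · intro i
            rw [hval]
            constructor
            · intro h; simp at h
            · rintro ⟨hle, hstrict⟩
              exfalso
              have hdi : Nat.dist (s i : ℕ) (v : ℕ) = m + 1 := by have := hcase i; omega
              apply h1
              refine ⟨i, hdi, fun j hj => ?_⟩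
              by_contra hne
              have := hstrict j hne
              omega
        · push_neg at h2
          have h2' : ¬ ∃ i : Fin k, ∃ u, (pathGraph n).Adj u v ∧ lab s m u = some (some i) := by
            rintro ⟨i, hi⟩
            exact h2 i ((hkey i).mp hi)
          have h1' : ¬ ∃! i : Fin k, ∃ u, (pathGraph n).Adj u v ∧ lab s m u = some (some i) :=
            fun hh => h2' hh.exists
          have hval : lab s (m + 1) v = none := by
            rw [hstep, stepLabel_none hnone, dif_neg h1', dif_neg h2']
          refine ⟨?_, ?_⟩
          · rw [hval]
            constructor
            · intro _ i
              have := hcase i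
              have := h2 i
              omega
            · intro _; rfl
          · intro i
            rw [hval]
            constructor
            · intro h; simp at h
            · rintro ⟨hle, -⟩
              have := hcase i
              have := h2 i
              omega
    · -- some player already reached v
      push_neg at hcase
      obtain ⟨i0, hi0⟩ := hcase
      have hnone : lab s m v ≠ none := by
        intro h
        exact absurd ((IH v).1.mp h i0) (by omega)
      obtain ⟨x, hx⟩ : ∃ x, lab s m v = some x := Option.ne_none_iff_exists'.mp hnone
      have hval : lab s (m + 1) v = some x := by
        rw [hstep, stepLabel_some hx]
      refine ⟨?_, ?_⟩
      · rw [hval]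
        constructor
        · intro h; simp at h
        · intro h; exact absurd (h i0) (by omega)
      · intro i
        rw [hval, ← hx, (IH v).2 i]
        constructor
        · rintro ⟨hle, hstrict⟩; exact ⟨by omega, hstrict⟩
        · rintro ⟨hle, hstrict⟩
          refine ⟨?_, hstrict⟩
          by_cases hii : i0 = i
          · subst hii; omega
          · have := hstrict i0 (Ne.symm (fun hh => hii hh.symm))
            omega

lemma final_eq_lab {n k : ℕ} (s : Fin k → Fin n) : finalLabel (pathGraph n) s = lab s n := by
  unfold finalLabel lab
  rw [Fintype.card_fin]

lemma final_some_iff {n k : ℕ} (s : Fin k → Fin n) (hs : Function.Injective s) (i : Fin k)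
    (v : Fin n) :
    finalLabel (pathGraph n) s v = some (some i) ↔
      ∀ j, j ≠ i → Nat.dist (s i : ℕ) (v : ℕ) < Nat.dist (s j : ℕ) (v : ℕ) := by
  rw [final_eq_lab, (master s hs n v).2 i]
  have hle : Nat.dist (s i : ℕ) (v : ℕ) ≤ n := by
    have := (s i).isLt
    have := v.isLt
    simp only [natDist_def]
    omega
  exact ⟨fun h => h.2, fun h => ⟨hle, h⟩⟩

lemma no_some_of_dup {n k : ℕ} (s : Fin k → Fin n) {i j : Fin k} (hij : j ≠ i)
    (heq : s j = s i) : ∀ m v, lab s m v ≠ some (some i) := by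
  intro m
  induction m with
  | zero =>
    intro v h
    have h' : initLabel s v = some (some i) := h
    unfold initLabel at h'
    by_cases hu : ∃! l, s l = v
    · rw [dif_pos hu] at h'
      have hc : hu.choose = i := by simpa using h'
      have h1 : s i = v := hc ▸ hu.choose_spec.1
      have h2 : j = hu.choose := hu.choose_spec.2 j (heq.trans h1)
      rw [hc] at h2
      exact hij h2
    · rw [dif_neg hu] at h'
      by_cases he : ∃ l, s l = v
      · rw [dif_pos he] at h'; simp at h'
      · rw [dif_neg he] at h'; simp at h'
  | succ m IHm =>
    intro v h
    rw [lab_succ] at h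
    simp only at h
    unfold stepLabel at h
    cases hl : lab s m v with
    | some x =>
      rw [hl] at h
      simp only at h
      exact IHm v (hl.trans h)
    | none =>
      rw [hl] at h
      simp only at h
      by_cases hd : ∃! l : Fin k, ∃ u, (pathGraph n).Adj u v ∧ lab s m u = some (some l)
      · rw [dif_pos hd] at h
        have hc : hd.choose = i := by simpa using h
        obtain ⟨u, -, hu⟩ := hd.choose_spec.1
        rw [hc] at hu
        exact IHm u hu
      · rw [dif_neg hd] at h
        by_cases he : ∃ l : Fin k, ∃ u, (pathGraph n).Adj u v ∧ lab s m u = some (some l)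
        · rw [dif_pos he] at h; simp at h
        · rw [dif_neg he] at h; simp at h

lemma utility_eq_zero_of_dup {n k : ℕ} (s : Fin k → Fin n) {i j : Fin k} (hij : j ≠ i)
    (heq : s j = s i) : utility (pathGraph n) (fun _ => (1 : ℤ)) s i = 0 := by
  unfold utility
  rw [Finset.filter_false_of_mem, Finset.sum_empty]
  intro v _
  rw [final_eq_lab]
  exact no_some_of_dup s hij heq n v

lemma utility_count {n k : ℕ} (s : Fin k → Fin n) (hs : Function.Injective s) (i : Fin k) :
    utility (pathGraph n) (fun _ => (1 : ℤ)) s i =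
      (((Finset.range n).filter fun x =>
        ∀ j, j ≠ i → Nat.dist (s i : ℕ) x < Nat.dist (s j : ℕ) x).card : ℤ) := by
  unfold utility
  rw [Finset.sum_const, nsmul_eq_mul, mul_one]
  norm_cast
  have hfe : (Finset.univ.filter fun v : Fin n => finalLabel (pathGraph n) s v = some (some i))
      = Finset.univ.filter
          (fun v : Fin n => ∀ j, j ≠ i → Nat.dist (s i : ℕ) (v : ℕ) < Nat.dist (s j : ℕ) (v : ℕ)) := by
    apply Finset.filter_congr
    intro v _
    exact final_some_iff s hs i v
  rw [hfe, Finset.card_filter, Finset.card_filter]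
  exact Fin.sum_univ_eq_sum_range
    (fun x => if (∀ j, j ≠ i → Nat.dist (s i : ℕ) x < Nat.dist (s j : ℕ) x) then 1 else 0) n

lemma count_lt (n c : ℕ) : ((Finset.range n).filter fun x => x < c).card = min c n := by
  have h : (Finset.range n).filter (fun x => x < c) = Finset.range (min c n) := by
    ext x
    simp only [Finset.mem_filter, Finset.mem_range]
    omega
  rw [h, Finset.card_range]

lemma count_ge (n c : ℕ) : ((Finset.range n).filter fun x => c ≤ x).card = n - c := by
  have h : (Finset.range n).filter (fun x => c ≤ x) = Finset.Ico c n := by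
    ext x
    simp only [Finset.mem_filter, Finset.mem_range, Finset.mem_Ico]
    omega
  rw [h, Nat.card_Ico]

lemma count_beats_lt {p q : ℕ} (hpq : p < q) (n : ℕ) :
    ((Finset.range n).filter fun x => Nat.dist p x < Nat.dist q x).card = min ((p + q + 1) / 2) n := by
  have h : ∀ x ∈ Finset.range n,
      (Nat.dist p x < Nat.dist q x) ↔ x < (p + q + 1) / 2 := by
    intro x _
    simp only [natDist_def]
    omega
  rw [Finset.filter_congr h, count_lt]

lemma count_beats_gt {p q : ℕ} (hpq : q < p) (n : ℕ) :
    ((Finset.range n).filter fun x => Nat.dist p x < Nat.dist q x).card = n - (p + q + 2) / 2 := by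
  have h : ∀ x ∈ Finset.range n,
      (Nat.dist p x < Nat.dist q x) ↔ (p + q + 2) / 2 ≤ x := by
    intro x _
    simp only [natDist_def]
    omega
  rw [Finset.filter_congr h, count_ge]

lemma inj2 {α : Type*} (u : Fin 2 → α) (h : u 0 ≠ u 1) : Function.Injective u := by
  intro i j hij
  fin_cases i <;> fin_cases j <;> simp_all

lemma inj3 {α : Type*} (u : Fin 3 → α) (h01 : u 0 ≠ u 1) (h02 : u 0 ≠ u 2) (h12 : u 1 ≠ u 2) :
    Function.Injective u := by
  intro i j hij
  fin_cases i <;> fin_cases j <;> simp_all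

lemma utility_two_zero {n : ℕ} (s : Fin 2 → Fin n) (hs : Function.Injective s) :
    utility (pathGraph n) (fun _ => (1 : ℤ)) s 0 =
      (((Finset.range n).filter fun x => Nat.dist (s 0 : ℕ) x < Nat.dist (s 1 : ℕ) x).card : ℤ) := by
  rw [utility_count s hs 0]
  norm_cast
  apply congrArg Finset.card
  apply Finset.filter_congr
  intro x _
  constructor
  · intro h; exact h 1 (by decide)
  · intro h j hj
    fin_cases j
    · exact absurd rfl hj
    · exact h

lemma utility_two_one {n : ℕ} (s : Fin 2 → Fin n) (hs : Function.Injective s) :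
    utility (pathGraph n) (fun _ => (1 : ℤ)) s 1 =
      (((Finset.range n).filter fun x => Nat.dist (s 1 : ℕ) x < Nat.dist (s 0 : ℕ) x).card : ℤ) := by
  rw [utility_count s hs 1]
  norm_cast
  apply congrArg Finset.card
  apply Finset.filter_congr
  intro x _
  constructor
  · intro h; exact h 0 (by decide)
  · intro h j hj
    fin_cases j
    · exact h
    · exact absurd rfl hj

lemma utility_three_last {n : ℕ} (s : Fin 3 → Fin n) (hs : Function.Injective s) :
    utility (pathGraph n) (fun _ => (1 : ℤ)) s (Fin.last 2) =
      (((Finset.range n).filter fun x =>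
        Nat.dist (s (Fin.last 2) : ℕ) x < Nat.dist (s 0 : ℕ) x ∧
        Nat.dist (s (Fin.last 2) : ℕ) x < Nat.dist (s 1 : ℕ) x).card : ℤ) := by
  rw [utility_count s hs (Fin.last 2)]
  norm_cast
  apply congrArg Finset.card
  apply Finset.filter_congr
  intro x _
  constructor
  · intro h; exact ⟨h 0 (by decide), h 1 (by decide)⟩
  · rintro ⟨h0, h1⟩ j hj
    fin_cases j
    · exact h0
    · exact h1
    · exact absurd rfl hj

lemma snoc_zero {n : ℕ} (s : Fin 2 → Fin n) (v : Fin n) :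
    (Fin.snoc s v : Fin 3 → Fin n) 0 = s 0 := by
  rw [show (0 : Fin 3) = Fin.castSucc 0 from rfl, Fin.snoc_castSucc]

lemma snoc_one {n : ℕ} (s : Fin 2 → Fin n) (v : Fin n) :
    (Fin.snoc s v : Fin 3 → Fin n) 1 = s 1 := by
  rw [show (1 : Fin 3) = Fin.castSucc 1 from rfl, Fin.snoc_castSucc]

lemma snoc_last' {n : ℕ} (s : Fin 2 → Fin n) (v : Fin n) :
    (Fin.snoc s v : Fin 3 → Fin n) (Fin.last 2) = v := Fin.snoc_last _ _

lemma core (n t p q : ℕ) (ht : 1 ≤ t) (hp : p < n) (hq : q < n) (hpq : p < q)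
    (H0 : t ≤ ((Finset.range n).filter fun x => Nat.dist p x < Nat.dist q x).card)
    (H1 : t ≤ ((Finset.range n).filter fun x => Nat.dist q x < Nat.dist p x).card)
    (Hdev : ∀ r, r < n → r ≠ q →
      ((Finset.range n).filter fun x => Nat.dist r x < Nat.dist q x).card ≤
        ((Finset.range n).filter fun x => Nat.dist p x < Nat.dist q x).card)
    (Hnu : ∀ r, r < n → r ≠ p → r ≠ q →
      ((Finset.range n).filter fun x =>
          Nat.dist r x < Nat.dist p x ∧ Nat.dist r x < Nat.dist q x).card ≤ t) :
    2 * t ≤ n ∧ n ≤ 2 * t + 2 := by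
  rw [count_beats_lt hpq] at H0
  rw [count_beats_gt hpq] at H1
  have hadj : q = p + 1 := by
    by_contra hne
    have hle := Hdev (q - 1) (by omega) (by omega)
    rw [count_beats_lt (show q - 1 < q by omega), count_beats_lt hpq] at hle
    omega
  subst hadj
  have hnu1 : p ≤ t := by
    rcases Nat.eq_zero_or_pos p with rfl | hppos
    · omega
    · have h := Hnu (p - 1) (by omega) (by omega) (by omega)
      have e : (Finset.range n).filter
            (fun x => Nat.dist (p - 1) x < Nat.dist p x ∧ Nat.dist (p - 1) x < Nat.dist (p + 1) x)
          = (Finset.range n).filter fun x => x < p := by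
        apply Finset.filter_congr
        intro x _
        simp only [natDist_def]
        omega
      rw [e, count_lt] at h
      omega
  have hnu2 : n - (p + 2) ≤ t := by
    rcases Nat.lt_or_ge (p + 2) n with hlt | hge
    · have h := Hnu (p + 2) hlt (by omega) (by omega)
      have e : (Finset.range n).filter
            (fun x => Nat.dist (p + 2) x < Nat.dist p x ∧ Nat.dist (p + 2) x < Nat.dist (p + 1) x)
          = (Finset.range n).filter fun x => p + 2 ≤ x := by
        apply Finset.filter_congr
        intro x _
        simp only [natDist_def]
        omega
      rw [e, count_ge] at h
      omega
    · omega
  omega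


end PathProof

open PathProof Finset in
/-- the unweighted path on `n` vertices admits `κ = 2` players with
positive boundary `t` if and only if `2t ≤ n ≤ 2t + 2`. -/
theorem path_admits_two_iff (n t : ℕ) (ht : 1 ≤ t) :
    pathAdmits n 2 t ↔ 2 * t ≤ n ∧ n ≤ 2 * t + 2 := by
  constructor
  · intro hadm
    unfold pathAdmits admitsWith at hadm
    obtain ⟨s, hNash, hnu, hmu⟩ := hadm
    rcases Nat.eq_zero_or_pos n with rfl | hn
    · exact absurd (s 0).isLt (Nat.not_lt_zero _)
    have hne : s 0 ≠ s 1 := by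
      intro h
      have h0 : utility (pathGraph n) (fun _ => (1 : ℤ)) s 0 = 0 :=
        utility_eq_zero_of_dup s (show (1 : Fin 2) ≠ 0 by decide) h.symm
      have h1 := hmu 0
      rw [h0] at h1
      omega
    have hinj : Function.Injective s := inj2 s hne
    have H0 : t ≤ ((Finset.range n).filter fun x =>
        Nat.dist (s 0 : ℕ) x < Nat.dist (s 1 : ℕ) x).card := by
      have h := hmu 0
      rw [utility_two_zero s hinj] at h
      exact_mod_cast h
    have H1 : t ≤ ((Finset.range n).filter fun x =>
        Nat.dist (s 1 : ℕ) x < Nat.dist (s 0 : ℕ) x).card := by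
      have h := hmu 1
      rw [utility_two_one s hinj] at h
      exact_mod_cast h
    have Hdev0 : ∀ r, r < n → r ≠ (s 1 : ℕ) →
        ((Finset.range n).filter fun x => Nat.dist r x < Nat.dist (s 1 : ℕ) x).card ≤
          ((Finset.range n).filter fun x => Nat.dist (s 0 : ℕ) x < Nat.dist (s 1 : ℕ) x).card := by
      intro r hr hrq
      have h := hNash 0 ⟨r, hr⟩
      have e0 : Function.update s 0 ⟨r, hr⟩ 0 = ⟨r, hr⟩ := Function.update_self _ _ _
      have e1 : Function.update s 0 ⟨r, hr⟩ 1 = s 1 := Function.update_of_ne (by decide) _ _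
      have hinj' : Function.Injective (Function.update s 0 ⟨r, hr⟩) := by
        apply inj2
        rw [e0, e1]
        intro hcon
        exact hrq (congrArg Fin.val hcon)
      rw [utility_two_zero _ hinj', utility_two_zero s hinj, e0, e1] at h
      simp only [Fin.val_mk] at h
      exact_mod_cast h
    have Hdev1 : ∀ r, r < n → r ≠ (s 0 : ℕ) →
        ((Finset.range n).filter fun x => Nat.dist r x < Nat.dist (s 0 : ℕ) x).card ≤
          ((Finset.range n).filter fun x => Nat.dist (s 1 : ℕ) x < Nat.dist (s 0 : ℕ) x).card := by
      intro r hr hrq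
      have h := hNash 1 ⟨r, hr⟩
      have e1 : Function.update s 1 ⟨r, hr⟩ 1 = ⟨r, hr⟩ := Function.update_self _ _ _
      have e0 : Function.update s 1 ⟨r, hr⟩ 0 = s 0 := Function.update_of_ne (by decide) _ _
      have hinj' : Function.Injective (Function.update s 1 ⟨r, hr⟩) := by
        apply inj2
        rw [e0, e1]
        intro hcon
        exact hrq (congrArg Fin.val hcon).symm
      rw [utility_two_one _ hinj', utility_two_one s hinj, e0, e1] at h
      simp only [Fin.val_mk] at h
      exact_mod_cast h
    have Hnu : ∀ r, r < n → r ≠ (s 0 : ℕ) → r ≠ (s 1 : ℕ) →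
        ((Finset.range n).filter fun x =>
          Nat.dist r x < Nat.dist (s 0 : ℕ) x ∧ Nat.dist r x < Nat.dist (s 1 : ℕ) x).card ≤ t := by
      intro r hr hr0 hr1
      have h := hnu ⟨r, hr⟩
      have e0 := snoc_zero s ⟨r, hr⟩
      have e1 := snoc_one s ⟨r, hr⟩
      have e2 := snoc_last' s ⟨r, hr⟩
      have hinj3 : Function.Injective (Fin.snoc s ⟨r, hr⟩ : Fin 3 → Fin n) := by
        apply inj3
        · rw [e0, e1]; exact hne
        · rw [e0, show (2 : Fin 3) = Fin.last 2 from rfl, e2]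
          intro hcon
          exact hr0 (congrArg Fin.val hcon).symm
        · rw [e1, show (2 : Fin 3) = Fin.last 2 from rfl, e2]
          intro hcon
          exact hr1 (congrArg Fin.val hcon).symm
      rw [utility_three_last _ hinj3, e0, e1, e2] at h
      simp only [Fin.val_mk] at h
      exact_mod_cast h
    rcases Nat.lt_or_ge (s 0 : ℕ) (s 1 : ℕ) with hlt | hge
    · exact core n t _ _ ht (s 0).isLt (s 1).isLt hlt H0 H1 Hdev0 Hnu
    · have hgt : (s 1 : ℕ) < (s 0 : ℕ) := by
        rcases Nat.lt_or_ge (s 1 : ℕ) (s 0 : ℕ) with h | h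
        · exact h
        · exact absurd (Fin.val_injective (Nat.le_antisymm h hge)) hne
      apply core n t (s 1 : ℕ) (s 0 : ℕ) ht (s 1).isLt (s 0).isLt hgt H1 H0 Hdev1
      intro r hr hr1 hr0
      have h := Hnu r hr hr0 hr1
      have e : (Finset.range n).filter
            (fun x => Nat.dist r x < Nat.dist (s 1 : ℕ) x ∧ Nat.dist r x < Nat.dist (s 0 : ℕ) x)
          = (Finset.range n).filter
            (fun x => Nat.dist r x < Nat.dist (s 0 : ℕ) x ∧ Nat.dist r x < Nat.dist (s 1 : ℕ) x) := by
        apply Finset.filter_congr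
        intro x _
        exact and_comm
      rw [e]
      exact h
  · rintro ⟨hn1, hn2⟩
    have hn : 2 ≤ n := by omega
    unfold pathAdmits admitsWith
    set A : Fin n := ⟨n / 2 - 1, by omega⟩ with hAdef
    set B : Fin n := ⟨n / 2, by omega⟩ with hBdef
    have ha : (A : ℕ) = n / 2 - 1 := rfl
    have hb : (B : ℕ) = n / 2 := rfl
    have hABval : (A : ℕ) < (B : ℕ) := by rw [ha, hb]; omega
    have hABne : A ≠ B := fun h => by
      have := congrArg Fin.val h
      omega
    have e0 : (![A, B] : Fin 2 → Fin n) 0 = A := rfl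
    have e1 : (![A, B] : Fin 2 → Fin n) 1 = B := rfl
    have hinj : Function.Injective ![A, B] := by
      apply inj2
      rw [e0, e1]
      exact hABne
    have hu0 : utility (pathGraph n) (fun _ => (1 : ℤ)) ![A, B] 0
        = ((min (((A : ℕ) + (B : ℕ) + 1) / 2) n : ℕ) : ℤ) := by
      rw [utility_two_zero _ hinj, e0, e1, count_beats_lt hABval]
    have hu1 : utility (pathGraph n) (fun _ => (1 : ℤ)) ![A, B] 1
        = ((n - ((B : ℕ) + (A : ℕ) + 2) / 2 : ℕ) : ℤ) := by
      rw [utility_two_one _ hinj, e0, e1, count_beats_gt hABval]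
    refine ⟨![A, B], ?_, ?_, ?_⟩
    · -- Nash
      have hdev0 : ∀ v' : Fin n,
          utility (pathGraph n) (fun _ => (1 : ℤ)) (Function.update ![A, B] 0 v') 0 ≤
            utility (pathGraph n) (fun _ => (1 : ℤ)) ![A, B] 0 := by
        intro v'
        by_cases hvB : v' = B
        · have hz : utility (pathGraph n) (fun _ => (1 : ℤ)) (Function.update ![A, B] 0 v') 0 = 0 := by
            apply utility_eq_zero_of_dup _ (show (1 : Fin 2) ≠ 0 by decide)
            rw [Function.update_of_ne (by decide), Function.update_self, e1, hvB]
          rw [hz, hu0]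
          positivity
        · have e0' : Function.update ![A, B] 0 v' 0 = v' := Function.update_self _ _ _
          have e1' : Function.update ![A, B] 0 v' 1 = B := by
            rw [Function.update_of_ne (by decide), e1]
          have hinj' : Function.Injective (Function.update ![A, B] 0 v') := by
            apply inj2
            rw [e0', e1']
            exact hvB
          rw [utility_two_zero _ hinj', e0', e1', hu0]
          rcases Nat.lt_trichotomy (v' : ℕ) (B : ℕ) with hlt | heq | hgt
          · rw [count_beats_lt hlt]
            omega
          · exact absurd (Fin.val_injective heq) hvB
          · rw [count_beats_gt hgt]
            omega
      have hdev1 : ∀ v' : Fin n,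
          utility (pathGraph n) (fun _ => (1 : ℤ)) (Function.update ![A, B] 1 v') 1 ≤
            utility (pathGraph n) (fun _ => (1 : ℤ)) ![A, B] 1 := by
        intro v'
        by_cases hvA : v' = A
        · have hz : utility (pathGraph n) (fun _ => (1 : ℤ)) (Function.update ![A, B] 1 v') 1 = 0 := by
            apply utility_eq_zero_of_dup _ (show (0 : Fin 2) ≠ 1 by decide)
            rw [Function.update_of_ne (by decide), Function.update_self, e0, hvA]
          rw [hz, hu1]
          positivity
        · have e1' : Function.update ![A, B] 1 v' 1 = v' := Function.update_self _ _ _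
          have e0' : Function.update ![A, B] 1 v' 0 = A := by
            rw [Function.update_of_ne (by decide), e0]
          have hinj' : Function.Injective (Function.update ![A, B] 1 v') := by
            apply inj2
            rw [e0', e1']
            exact fun h => hvA h.symm
          rw [utility_two_one _ hinj', e0', e1', hu1]
          rcases Nat.lt_trichotomy (v' : ℕ) (A : ℕ) with hlt | heq | hgt
          · rw [count_beats_lt hlt]
            omega
          · exact absurd (Fin.val_injective heq) hvA
          · rw [count_beats_gt hgt]
            omega
      intro i v'
      fin_cases i
      · exact hdev0 v'
      · exact hdev1 v'
    · -- nu bound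
      intro v
      by_cases hvA : v = A
      · have hz : utility (pathGraph n) (fun _ => (1 : ℤ)) (Fin.snoc ![A, B] v) (Fin.last 2) = 0 := by
          apply utility_eq_zero_of_dup _ (show (0 : Fin 3) ≠ Fin.last 2 by decide)
          rw [snoc_zero, snoc_last', e0, hvA]
        rw [hz]
        positivity
      by_cases hvB : v = B
      · have hz : utility (pathGraph n) (fun _ => (1 : ℤ)) (Fin.snoc ![A, B] v) (Fin.last 2) = 0 := by
          apply utility_eq_zero_of_dup _ (show (1 : Fin 3) ≠ Fin.last 2 by decide)
          rw [snoc_one, snoc_last', e1, hvB]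
        rw [hz]
        positivity
      have hinj3 : Function.Injective (Fin.snoc ![A, B] v : Fin 3 → Fin n) := by
        apply inj3
        · rw [snoc_zero, snoc_one, e0, e1]; exact hABne
        · rw [snoc_zero, show (2 : Fin 3) = Fin.last 2 from rfl, snoc_last', e0]
          exact fun h => hvA h.symm
        · rw [snoc_one, show (2 : Fin 3) = Fin.last 2 from rfl, snoc_last', e1]
          exact fun h => hvB h.symm
      rw [utility_three_last _ hinj3, snoc_zero, snoc_one, snoc_last', e0, e1]
      have hvA' : (v : ℕ) ≠ (A : ℕ) := fun h => hvA (Fin.val_injective h)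
      have hvB' : (v : ℕ) ≠ (B : ℕ) := fun h => hvB (Fin.val_injective h)
      rcases Nat.lt_or_ge (v : ℕ) (A : ℕ) with hlt | hge
      · have hsub : ((Finset.range n).filter fun x =>
              Nat.dist (v : ℕ) x < Nat.dist (A : ℕ) x ∧ Nat.dist (v : ℕ) x < Nat.dist (B : ℕ) x).card
            ≤ ((Finset.range n).filter fun x => Nat.dist (v : ℕ) x < Nat.dist (A : ℕ) x).card := by
          apply Finset.card_le_card
          intro x hx
          simp only [Finset.mem_filter] at hx ⊢
          exact ⟨hx.1, hx.2.1⟩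
        rw [count_beats_lt hlt] at hsub
        have hfin : ((Finset.range n).filter fun x =>
            Nat.dist (v : ℕ) x < Nat.dist (A : ℕ) x ∧ Nat.dist (v : ℕ) x < Nat.dist (B : ℕ) x).card ≤ t := by
          refine le_trans hsub ?_
          omega
        exact_mod_cast hfin
      · have hgt : (B : ℕ) < (v : ℕ) := by omega
        have hsub : ((Finset.range n).filter fun x =>
              Nat.dist (v : ℕ) x < Nat.dist (A : ℕ) x ∧ Nat.dist (v : ℕ) x < Nat.dist (B : ℕ) x).card
            ≤ ((Finset.range n).filter fun x => Nat.dist (v : ℕ) x < Nat.dist (B : ℕ) x).card := by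
          apply Finset.card_le_card
          intro x hx
          simp only [Finset.mem_filter] at hx ⊢
          exact ⟨hx.1, hx.2.2⟩
        rw [count_beats_gt hgt] at hsub
        have hfin : ((Finset.range n).filter fun x =>
            Nat.dist (v : ℕ) x < Nat.dist (A : ℕ) x ∧ Nat.dist (v : ℕ) x < Nat.dist (B : ℕ) x).card ≤ t := by
          refine le_trans hsub ?_
          omega
        exact_mod_cast hfin
    · -- mu bound
      have hmu0 : (t : ℤ) ≤ utility (pathGraph n) (fun _ => (1 : ℤ)) ![A, B] 0 := by
        rw [hu0]; omega
      have hmu1 : (t : ℤ) ≤ utility (pathGraph n) (fun _ => (1 : ℤ)) ![A, B] 1 := by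
        rw [hu1]; omega
      intro i
      fin_cases i
      · exact hmu0
      · exact hmu1
end
end

section
/- In the competitive diffusion game on an unweighted path P with n vertices, P admits κ = 3 players with boundary t if and only if t = 1 and n ∈ {3, 4, 5}. -/
open Classical

noncomputable section

namespace P3
open Finset Function

variable {n k : ℕ}

lemma path_adj {u v : Fin n} :
    (pathGraph n).Adj u v ↔ u ≠ v ∧ ((u:ℕ)+1 = v ∨ (v:ℕ)+1 = u) := by
  simp [pathGraph, SimpleGraph.fromRel_adj]

/-- min distance from v to a player -/
def md (s : Fin k → Fin n) (v : ℕ) : ℕ := sInf {d | ∃ i, d = Nat.dist v (s i)}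

lemma md_le (s : Fin k → Fin n) (v : ℕ) (i : Fin k) : md s v ≤ Nat.dist v (s i) :=
  Nat.sInf_le ⟨i, rfl⟩

lemma md_exists (s : Fin k → Fin n) (hk : 0 < k) (v : ℕ) :
    ∃ i, md s v = Nat.dist v (s i) :=
  Nat.sInf_mem (⟨_, ⟨⟨0, hk⟩, rfl⟩⟩ : {d | ∃ i, d = Nat.dist v (s i)}.Nonempty)

/-- the limiting (Voronoi) label -/
def EL (s : Fin k → Fin n) (v : Fin n) : Option (Option (Fin k)) :=
  if h : ∃! i, Nat.dist (v:ℕ) (s i) = md s (v:ℕ) then some (some h.choose) else some none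

lemma EL_isSome (s : Fin k → Fin n) (v : Fin n) : ∃ x, EL s v = some x := by
  unfold EL; split <;> exact ⟨_, rfl⟩

lemma EL_some_some {s : Fin k → Fin n} {v : Fin n} {i : Fin k}
    (h : EL s v = some (some i)) :
    Nat.dist (v:ℕ) (s i) = md s (v:ℕ) ∧ ∀ j, Nat.dist (v:ℕ) (s j) = md s (v:ℕ) → j = i := by
  unfold EL at h
  split at h
  · rename_i hex
    have h1 := hex.choose_spec
    have : hex.choose = i := by simpa using h
    rw [this] at h1
    exact ⟨h1.1, fun j hj => h1.2 j hj⟩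
  · simp at h

lemma EL_of_unique {s : Fin k → Fin n} {v : Fin n} {i : Fin k}
    (h1 : Nat.dist (v:ℕ) (s i) = md s (v:ℕ))
    (h2 : ∀ j, Nat.dist (v:ℕ) (s j) = md s (v:ℕ) → j = i) :
    EL s v = some (some i) := by
  unfold EL
  rw [dif_pos ⟨i, h1, h2⟩]
  have := (⟨i, h1, h2⟩ : ∃! j, Nat.dist (v:ℕ) (s j) = md s (v:ℕ)).choose_spec
  exact congrArg _ (congrArg _ (h2 _ this.1))


lemma stepLabel_some {V : Type*} {k : ℕ} (G : SimpleGraph V)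
    (L : V → Option (Option (Fin k))) (v : V) (x : Option (Fin k)) (h : L v = some x) :
    stepLabel G L v = some x := by
  unfold stepLabel; rw [h]

lemma stepLabel_none_eval {V : Type*} {k : ℕ} (G : SimpleGraph V)
    (L : V → Option (Option (Fin k))) (v : V) (h : L v = none) :
    stepLabel G L v =
      if h : ∃! i : Fin k, ∃ u, G.Adj u v ∧ L u = some (some i) then some (some h.choose)
      else if _h : (∃ i : Fin k, ∃ u, G.Adj u v ∧ L u = some (some i)) then some none
      else none := by
  unfold stepLabel; rw [h]

lemma md_adj (s : Fin k → Fin n) (hk : 0 < k) {u v : Fin n}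
    (h : (u:ℕ)+1 = (v:ℕ) ∨ (v:ℕ)+1 = (u:ℕ)) : md s (v:ℕ) ≤ md s (u:ℕ) + 1 := by
  obtain ⟨j, hj⟩ := md_exists s hk (u:ℕ)
  have h1 := md_le s (v:ℕ) j
  simp only [Nat.dist] at *
  omega

lemma iter_eq (s : Fin k → Fin n) (hs : Function.Injective s) (hk : 0 < k) :
    ∀ (T : ℕ) (v : Fin n),
      ((fun L v => stepLabel (pathGraph n) L v)^[T] (initLabel s)) v
        = if md s (v:ℕ) ≤ T then EL s v else none := by
  intro T
  induction T with
  | zero =>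
    intro v
    rw [Function.iterate_zero_apply]
    by_cases h0 : ∃ i, s i = v
    · obtain ⟨i, hi⟩ := h0
      have hu : ∃! j, s j = v := ⟨i, hi, fun j hj => hs (hj.trans hi.symm)⟩
      have hd0 : Nat.dist (v:ℕ) (s i : ℕ) = 0 := by rw [hi]; exact Nat.dist_self _
      have hmd : md s (v:ℕ) = 0 :=
        Nat.le_antisymm (hd0 ▸ md_le s (v:ℕ) i) (Nat.zero_le _)
      rw [initLabel, dif_pos hu, if_pos (by omega)]
      have hch : hu.choose = i := hs (hu.choose_spec.1.trans hi.symm)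
      rw [hch]
      refine (EL_of_unique (by rw [hd0, hmd]) ?_).symm
      intro j hj
      rw [hmd] at hj
      apply hs
      apply Fin.ext
      simp only [Nat.dist] at hj hd0
      omega
    · have hnu : ¬ ∃! j, s j = v := fun ⟨j, hj, _⟩ => h0 ⟨j, hj⟩
      rw [initLabel, dif_neg hnu, dif_neg h0, if_neg]
      intro hle
      have h0' : md s (v:ℕ) = 0 := Nat.le_antisymm hle (Nat.zero_le _)
      obtain ⟨i, hi⟩ := md_exists s hk (v:ℕ)
      rw [h0'] at hi
      refine h0 ⟨i, Fin.ext ?_⟩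
      simp only [Nat.dist] at hi
      omega
  | succ T ih =>
    intro v
    rw [Function.iterate_succ_apply']
    set L := (fun L v => stepLabel (pathGraph n) L v)^[T] (initLabel s) with hLdef
    show stepLabel (pathGraph n) L v = _
    by_cases hmv : md s (v:ℕ) ≤ T
    · obtain ⟨x, hx⟩ := EL_isSome s v
      have hLv : L v = some x := by rw [ih v, if_pos hmv, hx]
      rw [stepLabel_some _ _ _ _ hLv, if_pos (le_trans hmv (Nat.le_succ T)), hx]
    · have hLv : L v = none := by rw [ih v, if_neg hmv]
      rw [stepLabel_none_eval _ _ _ hLv]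
      by_cases hm : md s (v:ℕ) = T + 1
      · -- fact A: every label arriving at v comes from a closest player
        have labA : ∀ (j : Fin k) (u : Fin n), (pathGraph n).Adj u v → L u = some (some j) →
            Nat.dist (v:ℕ) (s j : ℕ) = md s (v:ℕ) := by
          intro j u hadj hlab
          have hiu := ih u
          by_cases hmu : md s (u:ℕ) ≤ T
          · rw [if_pos hmu] at hiu
            have hel : EL s u = some (some j) := by rw [← hiu]; exact hlab
            obtain ⟨hd, -⟩ := EL_some_some hel
            obtain ⟨-, hadj'⟩ := path_adj.mp hadj
            have h2 := md_le s (v:ℕ) j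
            simp only [Nat.dist] at *
            omega
          · rw [if_neg hmu] at hiu
            rw [hiu] at hlab; exact absurd hlab (by simp)
        -- fact B: each closest player reaches v through a neighbour
        have labB : ∀ i : Fin k, Nat.dist (v:ℕ) (s i : ℕ) = T + 1 →
            ∃ u : Fin n, (pathGraph n).Adj u v ∧ L u = some (some i) := by
          intro i hi
          have hvn : (v:ℕ) < n := v.isLt
          have hsn : (s i : ℕ) < n := (s i).isLt
          obtain ⟨u, hadj, hud⟩ :
              ∃ u : Fin n, (pathGraph n).Adj u v ∧ Nat.dist (u:ℕ) (s i : ℕ) = T := by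
            by_cases hlt : (s i : ℕ) < (v:ℕ)
            · refine ⟨⟨(v:ℕ) - 1, by omega⟩, path_adj.mpr ⟨?_, ?_⟩, ?_⟩
              · apply Fin.ne_of_val_ne
                show (v:ℕ) - 1 ≠ (v:ℕ)
                omega
              · left
                show (v:ℕ) - 1 + 1 = (v:ℕ)
                omega
              · show Nat.dist ((v:ℕ) - 1) (s i : ℕ) = T
                simp only [Nat.dist] at hi ⊢
                omega
            · have hgt : (v:ℕ) < (s i : ℕ) := by simp only [Nat.dist] at hi; omega
              refine ⟨⟨(v:ℕ) + 1, by omega⟩, path_adj.mpr ⟨?_, ?_⟩, ?_⟩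
              · apply Fin.ne_of_val_ne
                show (v:ℕ) + 1 ≠ (v:ℕ)
                omega
              · right
                rfl
              · show Nat.dist ((v:ℕ) + 1) (s i : ℕ) = T
                simp only [Nat.dist] at hi ⊢
                omega
          obtain ⟨-, hadj'⟩ := path_adj.mp hadj
          have hmuT : md s (u:ℕ) = T := by
            have h1 : md s (u:ℕ) ≤ T := hud ▸ md_le s (u:ℕ) i
            obtain ⟨j0, hj0⟩ := md_exists s hk (u:ℕ)
            have h2 := md_le s (v:ℕ) j0
            rw [hm] at h2
            simp only [Nat.dist] at *
            omega
          have huniq : ∀ j, Nat.dist (u:ℕ) (s j : ℕ) = md s (u:ℕ) → j = i := by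
            intro j hj
            rw [hmuT] at hj
            have h2 := md_le s (v:ℕ) j
            rw [hm] at h2
            apply hs
            apply Fin.ext
            simp only [Nat.dist] at *
            omega
          have hel : EL s u = some (some i) := EL_of_unique (by rw [hud, hmuT]) huniq
          refine ⟨u, hadj, ?_⟩
          rw [ih u, if_pos (le_of_eq hmuT), hel]
        rw [if_pos (by omega)]
        by_cases hEx : ∃! i, Nat.dist (v:ℕ) (s i : ℕ) = md s (v:ℕ)
        · have hspec := hEx.choose_spec
          have hwit : ∃ u, (pathGraph n).Adj u v ∧ L u = some (some hEx.choose) :=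
            labB hEx.choose (by rw [hspec.1, hm])
          have huniq : ∀ j, (∃ u, (pathGraph n).Adj u v ∧ L u = some (some j)) →
              j = hEx.choose := by
            rintro j ⟨u, h1, h2⟩
            exact hspec.2 j (labA j u h1 h2)
          have hd : ∃! j : Fin k, ∃ u, (pathGraph n).Adj u v ∧ L u = some (some j) :=
            ⟨hEx.choose, hwit, huniq⟩
          rw [dif_pos hd]
          have hch : hd.choose = hEx.choose := huniq _ hd.choose_spec.1
          rw [hch]
          exact (EL_of_unique hspec.1 (fun j hj => hspec.2 j hj)).symm
        · have hELv : EL s v = some none := by unfold EL; rw [dif_neg hEx]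
          obtain ⟨i1, hi1⟩ := md_exists s hk (v:ℕ)
          have h2 : ∃ i2, Nat.dist (v:ℕ) (s i2 : ℕ) = md s (v:ℕ) ∧ i2 ≠ i1 := by
            by_contra hno
            push_neg at hno
            exact hEx ⟨i1, hi1.symm, fun j hj => hno j hj⟩
          obtain ⟨i2, hi2d, hne⟩ := h2
          obtain ⟨u1, ha1, hl1⟩ := labB i1 (by rw [← hi1, hm])
          obtain ⟨u2, ha2, hl2⟩ := labB i2 (by rw [hi2d, hm])
          have hnd : ¬ ∃! j : Fin k, ∃ u, (pathGraph n).Adj u v ∧ L u = some (some j) := by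
            rintro ⟨j, -, hun⟩
            exact hne ((hun i2 ⟨u2, ha2, hl2⟩).trans (hun i1 ⟨u1, ha1, hl1⟩).symm)
          rw [dif_neg hnd, dif_pos ⟨i1, u1, ha1, hl1⟩, hELv]
      · -- md > T+1 : nothing arrives yet
        have hno : ¬ ∃ j : Fin k, ∃ u, (pathGraph n).Adj u v ∧ L u = some (some j) := by
          rintro ⟨j, u, hadj, hlab⟩
          have hiu := ih u
          by_cases hmu : md s (u:ℕ) ≤ T
          · have := md_adj s hk (path_adj.mp hadj).2
            omega
          · rw [if_neg hmu] at hiu; rw [hiu] at hlab; exact absurd hlab (by simp)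
        rw [dif_neg (fun ⟨j, hj, _⟩ => hno ⟨j, hj⟩), dif_neg hno, if_neg (by omega)]


lemma finalLabel_eq (s : Fin k → Fin n) (hs : Function.Injective s) (hk : 0 < k)
    (v : Fin n) : finalLabel (pathGraph n) s v = EL s v := by
  have h := iter_eq s hs hk (Fintype.card (Fin n)) v
  rw [finalLabel, h, if_pos]
  obtain ⟨i, hi⟩ := md_exists s hk (v:ℕ)
  have h1 : (v:ℕ) < n := v.isLt
  have h2 : (s i : ℕ) < n := (s i).isLt
  rw [hi, Fintype.card_fin]
  simp only [Nat.dist]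
  omega

lemma EL_some_iff (s : Fin k → Fin n) (hk : 0 < k) (v : Fin n) (i : Fin k) :
    EL s v = some (some i) ↔ ∀ j, j ≠ i → Nat.dist (v:ℕ) (s i : ℕ) < Nat.dist (v:ℕ) (s j : ℕ) := by
  constructor
  · intro h j hj
    obtain ⟨h1, h2⟩ := EL_some_some h
    have h3 := md_le s (v:ℕ) j
    rcases lt_or_eq_of_le (h1 ▸ h3 : md s (v:ℕ) ≤ Nat.dist (v:ℕ) (s j : ℕ)) with h4 | h4
    · omega
    · exact absurd (h2 j h4.symm) hj
  · intro h
    obtain ⟨j0, hj0⟩ := md_exists s hk (v:ℕ)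
    have hj0i : j0 = i := by
      by_contra hne
      have := h j0 hne
      have h3 := md_le s (v:ℕ) i
      omega
    subst hj0i
    refine EL_of_unique hj0.symm ?_
    intro j hj
    by_contra hne
    have := h j hne
    omega

/-- key computation: card of vertices dominated by a player -/
lemma ucard_eq (s : Fin k → Fin n) (hs : Function.Injective s) (hk : 0 < k) (i : Fin k) :
    (Finset.univ.filter (fun v => finalLabel (pathGraph n) s v = some (some i))).card
      = (Finset.univ.filter
          (fun v : Fin n => ∀ j, j ≠ i → Nat.dist (v:ℕ) (s i : ℕ) < Nat.dist (v:ℕ) (s j : ℕ))).card := by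
  congr 1
  apply Finset.filter_congr
  intro v _
  rw [finalLabel_eq s hs hk v]
  exact EL_some_iff s hk v i

lemma utility_eq_card {V : Type*} [Fintype V] (G : SimpleGraph V) (s : Fin k → V) (i : Fin k) :
    utility G (fun _ => (1:ℤ)) s i
      = ((Finset.univ.filter (fun v => finalLabel G s v = some (some i))).card : ℤ) := by
  rw [utility, Finset.sum_const, nsmul_eq_mul, mul_one]

/-- a colliding player never dominates anything -/
lemma collide_label {V : Type*} {k : ℕ} (G : SimpleGraph V) (s : Fin k → V) (i j : Fin k)
    (hij : i ≠ j) (hcol : s i = s j) :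
    ∀ (T : ℕ) (v : V), ((fun L v => stepLabel G L v)^[T] (initLabel s)) v ≠ some (some i) := by
  intro T
  induction T with
  | zero =>
    intro v h
    rw [Function.iterate_zero_apply, initLabel] at h
    split at h
    · rename_i hex
      have hch : hex.choose = i := by simpa using h
      have h1 := hex.choose_spec.1
      rw [hch] at h1
      have : j = hex.choose := hex.choose_spec.2 j (show s j = v by rw [← hcol, h1])
      rw [hch] at this
      exact hij this.symm
    · split at h
      · simp at h
      · simp at h
  | succ T ih =>
    intro v h
    rw [Function.iterate_succ_apply'] at h
    set L := (fun L v => stepLabel G L v)^[T] (initLabel s) with hLdef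
    rw [stepLabel] at h
    rcases hLv : L v with - | x
    · rw [hLv] at h
      simp only at h
      split at h
      · rename_i hex
        have hch : hex.choose = i := by simpa using h
        obtain ⟨u, -, hu⟩ := hch ▸ hex.choose_spec.1
        exact ih u hu
      · split at h <;> simp at h
    · rw [hLv] at h
      simp only at h
      exact ih v (hLv.trans h)

lemma collide_utility {V : Type*} [Fintype V] {k : ℕ} (G : SimpleGraph V) (s : Fin k → V)
    (i j : Fin k) (hij : i ≠ j) (hcol : s i = s j) :
    utility G (fun _ => (1:ℤ)) s i = 0 := by
  rw [utility_eq_card]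
  have : (Finset.univ.filter (fun v => finalLabel G s v = some (some i))) = ∅ := by
    apply Finset.filter_false_of_mem
    intro v _
    exact collide_label G s i j hij hcol (Fintype.card V) v
  rw [this]
  simp

/-- a uniquely placed player keeps its own vertex -/
lemma own_label {V : Type*} {k : ℕ} (G : SimpleGraph V) (s : Fin k → V) (i : Fin k)
    (h : ∀ j, s j = s i → j = i) :
    ∀ (T : ℕ), ((fun L v => stepLabel G L v)^[T] (initLabel s)) (s i) = some (some i) := by
  intro T
  induction T with
  | zero =>
    rw [Function.iterate_zero_apply, initLabel]
    have hex : ∃! j, s j = s i := ⟨i, rfl, h⟩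
    rw [dif_pos hex]
    exact congrArg _ (congrArg _ (h _ hex.choose_spec.1))
  | succ T ih =>
    rw [Function.iterate_succ_apply']
    exact stepLabel_some _ _ _ _ ih

lemma own_utility {V : Type*} [Fintype V] {k : ℕ} (G : SimpleGraph V) (s : Fin k → V)
    (i : Fin k) (h : ∀ j, s j = s i → j = i) :
    1 ≤ utility G (fun _ => (1:ℤ)) s i := by
  rw [utility_eq_card]
  have : s i ∈ Finset.univ.filter (fun v => finalLabel G s v = some (some i)) := by
    simp only [Finset.mem_filter, Finset.mem_univ, true_and]
    exact own_label G s i h (Fintype.card V)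
  have := Finset.card_pos.mpr ⟨s i, this⟩
  exact_mod_cast this

/-- total utility is at most the number of vertices -/
lemma sum_utility_le {V : Type*} [Fintype V] {k : ℕ} (G : SimpleGraph V) (s : Fin k → V) :
    ∑ i : Fin k, utility G (fun _ => (1:ℤ)) s i ≤ (Fintype.card V : ℤ) := by
  have h : ∀ i : Fin k, utility G (fun _ => (1:ℤ)) s i
      = ((Finset.univ.filter (fun v => finalLabel G s v = some (some i))).card : ℤ) :=
    fun i => utility_eq_card G s i
  calc ∑ i : Fin k, utility G (fun _ => (1:ℤ)) s i
      = ((∑ i : Fin k, (Finset.univ.filter (fun v => finalLabel G s v = some (some i))).card : ℕ) : ℤ) := by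
        rw [Nat.cast_sum]; exact Finset.sum_congr rfl (fun i _ => h i)
    _ ≤ (Fintype.card V : ℤ) := by
        have hdisj : ∀ a ∈ (Finset.univ : Finset (Fin k)), ∀ b ∈ Finset.univ, a ≠ b →
            Disjoint (Finset.univ.filter (fun v => finalLabel G s v = some (some a)))
              (Finset.univ.filter (fun v => finalLabel G s v = some (some b))) := by
          intro a _ b _ hab
          rw [Finset.disjoint_left]
          intro v hv1 hv2
          rw [Finset.mem_filter] at hv1 hv2
          exact hab (Option.some_injective _ (Option.some_injective _ (hv1.2.symm.trans hv2.2)))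
        have h1 := (Finset.card_biUnion hdisj).symm
        have h2 : (Finset.univ.biUnion
            (fun i => Finset.univ.filter (fun v => finalLabel G s v = some (some i)))).card
            ≤ Fintype.card V := by
          simpa using Finset.card_le_univ _
        exact_mod_cast h1 ▸ h2

lemma card_val (lo hi : ℕ) (hhi : hi ≤ n) :
    (Finset.univ.filter fun v : Fin n => lo ≤ (v:ℕ) ∧ (v:ℕ) < hi).card = hi - lo := by
  rw [← Nat.card_Ico lo hi]
  rw [← Finset.card_attachFin (Finset.Ico lo hi)
    (fun m hm => lt_of_lt_of_le (Finset.mem_Ico.mp hm).2 hhi)]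
  congr 1
  apply Finset.ext
  intro v
  simp [Finset.mem_attachFin, Finset.mem_Ico]

lemma countLeft (s : Fin k → Fin n) (i j0 : Fin k) (hj0 : j0 ≠ i)
    (hlt : ∀ j, j ≠ i → (s i:ℕ) < s j) (hmin : ∀ j, j ≠ i → (s j0:ℕ) ≤ s j) :
    (Finset.univ.filter
      (fun v : Fin n => ∀ j, j ≠ i → Nat.dist (v:ℕ) (s i : ℕ) < Nat.dist (v:ℕ) (s j : ℕ))).card
    = ((s i:ℕ) + (s j0:ℕ) + 1)/2 := by
  have key : ∀ v : Fin n,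
      (∀ j, j ≠ i → Nat.dist (v:ℕ) (s i : ℕ) < Nat.dist (v:ℕ) (s j : ℕ))
      ↔ (0 ≤ (v:ℕ) ∧ (v:ℕ) < ((s i:ℕ) + (s j0:ℕ) + 1)/2) := by
    intro v
    constructor
    · intro h
      have h1 := h j0 hj0
      have h2 := hlt j0 hj0
      simp only [Nat.dist] at h1
      exact ⟨Nat.zero_le _, by omega⟩
    · rintro ⟨-, hv⟩ j hj
      have h2 := hlt j hj
      have h3 := hmin j hj
      have h4 := hlt j0 hj0
      simp only [Nat.dist]
      omega
  rw [Finset.filter_congr (fun v _ => key v), card_val]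
  · omega
  · have := (s j0).isLt
    have := hlt j0 hj0
    omega

lemma countRight (s : Fin k → Fin n) (i j0 : Fin k) (hj0 : j0 ≠ i)
    (hgt : ∀ j, j ≠ i → (s j:ℕ) < s i) (hmax : ∀ j, j ≠ i → (s j:ℕ) ≤ s j0) :
    (Finset.univ.filter
      (fun v : Fin n => ∀ j, j ≠ i → Nat.dist (v:ℕ) (s i : ℕ) < Nat.dist (v:ℕ) (s j : ℕ))).card
    = n - ((s j0:ℕ) + (s i:ℕ))/2 - 1 := by
  have key : ∀ v : Fin n,
      (∀ j, j ≠ i → Nat.dist (v:ℕ) (s i : ℕ) < Nat.dist (v:ℕ) (s j : ℕ))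
      ↔ (((s j0:ℕ) + (s i:ℕ))/2 + 1 ≤ (v:ℕ) ∧ (v:ℕ) < n) := by
    intro v
    constructor
    · intro h
      have h1 := h j0 hj0
      have h2 := hgt j0 hj0
      simp only [Nat.dist] at h1
      exact ⟨by omega, v.isLt⟩
    · rintro ⟨hv, -⟩ j hj
      have h2 := hgt j hj
      have h3 := hmax j hj
      have h4 := hgt j0 hj0
      simp only [Nat.dist]
      omega
  rw [Finset.filter_congr (fun v _ => key v), card_val _ _ (le_refl n)]
  omega

lemma countMid (s : Fin k → Fin n) (i ja jb : Fin k) (hja : ja ≠ i) (hjb : jb ≠ i)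
    (h1 : (s ja:ℕ) < s i) (h2 : (s i:ℕ) < s jb)
    (hsplit : ∀ j, j ≠ i → (s j:ℕ) ≤ s ja ∨ (s jb:ℕ) ≤ s j) :
    (Finset.univ.filter
      (fun v : Fin n => ∀ j, j ≠ i → Nat.dist (v:ℕ) (s i : ℕ) < Nat.dist (v:ℕ) (s j : ℕ))).card
    = ((s i:ℕ) + (s jb:ℕ) + 1)/2 - ((s ja:ℕ) + (s i:ℕ))/2 - 1 := by
  have key : ∀ v : Fin n,
      (∀ j, j ≠ i → Nat.dist (v:ℕ) (s i : ℕ) < Nat.dist (v:ℕ) (s j : ℕ))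
      ↔ (((s ja:ℕ) + (s i:ℕ))/2 + 1 ≤ (v:ℕ) ∧ (v:ℕ) < ((s i:ℕ) + (s jb:ℕ) + 1)/2) := by
    intro v
    constructor
    · intro h
      have ha := h ja hja
      have hb := h jb hjb
      simp only [Nat.dist] at ha hb
      omega
    · rintro ⟨hv1, hv2⟩ j hj
      rcases hsplit j hj with hc | hc
      · simp only [Nat.dist]; omega
      · simp only [Nat.dist]; omega
  rw [Finset.filter_congr (fun v _ => key v), card_val]
  · omega
  · have := (s jb).isLt
    omega

lemma util_left (s : Fin k → Fin n) (hs : Function.Injective s) (hk : 0 < k)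
    (i j0 : Fin k) (hj0 : j0 ≠ i)
    (hlt : ∀ j, j ≠ i → (s i:ℕ) < s j) (hmin : ∀ j, j ≠ i → (s j0:ℕ) ≤ s j) :
    utility (pathGraph n) (fun _ => (1:ℤ)) s i = ((((s i:ℕ) + (s j0:ℕ) + 1)/2 : ℕ) : ℤ) := by
  rw [utility_eq_card, ucard_eq s hs hk, countLeft s i j0 hj0 hlt hmin]

lemma util_right (s : Fin k → Fin n) (hs : Function.Injective s) (hk : 0 < k)
    (i j0 : Fin k) (hj0 : j0 ≠ i)
    (hgt : ∀ j, j ≠ i → (s j:ℕ) < s i) (hmax : ∀ j, j ≠ i → (s j:ℕ) ≤ s j0) :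
    utility (pathGraph n) (fun _ => (1:ℤ)) s i = ((n - ((s j0:ℕ) + (s i:ℕ))/2 - 1 : ℕ) : ℤ) := by
  rw [utility_eq_card, ucard_eq s hs hk, countRight s i j0 hj0 hgt hmax]

lemma util_mid (s : Fin k → Fin n) (hs : Function.Injective s) (hk : 0 < k)
    (i ja jb : Fin k) (hja : ja ≠ i) (hjb : jb ≠ i)
    (h1 : (s ja:ℕ) < s i) (h2 : (s i:ℕ) < s jb)
    (hsplit : ∀ j, j ≠ i → (s j:ℕ) ≤ s ja ∨ (s jb:ℕ) ≤ s j) :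
    utility (pathGraph n) (fun _ => (1:ℤ)) s i
      = ((((s i:ℕ) + (s jb:ℕ) + 1)/2 - ((s ja:ℕ) + (s i:ℕ))/2 - 1 : ℕ) : ℤ) := by
  rw [utility_eq_card, ucard_eq s hs hk, countMid s i ja jb hja hjb h1 h2 hsplit]


lemma fin3_cover {i j k : Fin 3} (hij : i ≠ j) (hjk : j ≠ k) (hik : i ≠ k) (l : Fin 3) :
    l = i ∨ l = j ∨ l = k := by
  have h1 : (i:ℕ) ≠ j := fun h => hij (Fin.ext h)
  have h2 : (j:ℕ) ≠ k := fun h => hjk (Fin.ext h)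
  have h3 : (i:ℕ) ≠ k := fun h => hik (Fin.ext h)
  have : (l:ℕ) = i ∨ (l:ℕ) = j ∨ (l:ℕ) = k := by
    have := i.isLt; have := j.isLt; have := k.isLt; have := l.isLt
    omega
  rcases this with h | h | h
  · exact Or.inl (Fin.ext h)
  · exact Or.inr (Or.inl (Fin.ext h))
  · exact Or.inr (Or.inr (Fin.ext h))

lemma inj3 {s : Fin 3 → Fin n} {i j k : Fin 3} (hij : i ≠ j) (hjk : j ≠ k) (hik : i ≠ k)
    (h1 : (s i:ℕ) < s j) (h2 : (s j:ℕ) < s k) : Function.Injective s := by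
  intro x y hxy
  have hv := congrArg Fin.val hxy
  rcases fin3_cover hij hjk hik x with rfl | rfl | rfl <;>
    rcases fin3_cover hij hjk hik y with rfl | rfl | rfl <;>
    first
      | rfl
      | exact absurd hv (by omega)

lemma sorted3 (s : Fin 3 → Fin n) (hs : Function.Injective s) :
    ∃ i j k : Fin 3, i ≠ j ∧ j ≠ k ∧ i ≠ k ∧ (s i:ℕ) < s j ∧ (s j:ℕ) < s k := by
  have e01 : (s 0 : ℕ) ≠ s 1 := fun h => absurd (hs (Fin.ext h)) (by decide)
  have e02 : (s 0 : ℕ) ≠ s 2 := fun h => absurd (hs (Fin.ext h)) (by decide)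
  have e12 : (s 1 : ℕ) ≠ s 2 := fun h => absurd (hs (Fin.ext h)) (by decide)
  rcases Nat.lt_trichotomy (s 0 : ℕ) (s 1 : ℕ) with h01 | h01 | h01
  · rcases Nat.lt_trichotomy (s 1 : ℕ) (s 2 : ℕ) with h12 | h12 | h12
    · exact ⟨0, 1, 2, by decide, by decide, by decide, h01, h12⟩
    · exact absurd h12 e12
    · rcases Nat.lt_trichotomy (s 0 : ℕ) (s 2 : ℕ) with h02 | h02 | h02
      · exact ⟨0, 2, 1, by decide, by decide, by decide, h02, h12⟩
      · exact absurd h02 e02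
      · exact ⟨2, 0, 1, by decide, by decide, by decide, h02, h01⟩
  · exact absurd h01 e01
  · rcases Nat.lt_trichotomy (s 0 : ℕ) (s 2 : ℕ) with h02 | h02 | h02
    · exact ⟨1, 0, 2, by decide, by decide, by decide, h01, h02⟩
    · exact absurd h02 e02
    · rcases Nat.lt_trichotomy (s 1 : ℕ) (s 2 : ℕ) with h12 | h12 | h12
      · exact ⟨1, 2, 0, by decide, by decide, by decide, h12, h02⟩
      · exact absurd h12 e12
      · exact ⟨2, 1, 0, by decide, by decide, by decide, h12, h01⟩

theorem no_nash {n : ℕ} (hn : 6 ≤ n) (s : Fin 3 → Fin n) :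
    ¬ isNash (pathGraph n) (fun _ => (1:ℤ)) s := by
  intro hN
  by_cases hs : Function.Injective s
  case neg =>
    -- two players collide; the collider can move to a free vertex and gain
    simp only [Function.Injective] at hs
    push_neg at hs
    obtain ⟨i, j, hcol, hij⟩ := hs
    have hfree : ∃ v : Fin n, v ∉ Finset.univ.image s := by
      by_contra h
      push_neg at h
      have hsub : (Finset.univ : Finset (Fin n)) ⊆ Finset.univ.image s := fun v _ => h v
      have h1 := Finset.card_le_card hsub
      have h2 := Finset.card_image_le (s := (Finset.univ : Finset (Fin 3))) (f := s)
      simp [Finset.card_univ] at h1 h2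
      omega
    obtain ⟨v, hv⟩ := hfree
    have h0 : utility (pathGraph n) (fun _ => (1:ℤ)) s i = 0 :=
      collide_utility _ s i j hij hcol
    have h1 : 1 ≤ utility (pathGraph n) (fun _ => (1:ℤ)) (Function.update s i v) i := by
      apply own_utility
      intro l hl
      by_contra hne
      rw [Function.update_of_ne hne, Function.update_self] at hl
      exact hv (Finset.mem_image.mpr ⟨l, Finset.mem_univ l, hl⟩)
    have := hN i v
    omega
  case pos =>
    obtain ⟨i, j, k, hij, hjk, hik, hab, hbc⟩ := sorted3 s hs
    set a := (s i : ℕ) with ha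
    set b := (s j : ℕ) with hb
    set c := (s k : ℕ) with hc
    have hcn : c < n := (s k).isLt
    have hcover := fin3_cover hij hjk hik
    -- utility of current profile
    have hui : utility (pathGraph n) (fun _ => (1:ℤ)) s i = (((a + b + 1)/2 : ℕ) : ℤ) := by
      apply util_left s hs (by norm_num) i j (Ne.symm hij)
      · intro l hl
        rcases hcover l with rfl | rfl | rfl
        · exact absurd rfl hl
        · exact hab
        · omega
      · intro l hl
        rcases hcover l with rfl | rfl | rfl
        · exact absurd rfl hl
        · exact le_refl _
        · omega
    have huj : utility (pathGraph n) (fun _ => (1:ℤ)) s j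
        = (((b + c + 1)/2 - (a + b)/2 - 1 : ℕ) : ℤ) := by
      apply util_mid s hs (by norm_num) j i k hij (Ne.symm hjk) hab hbc
      intro l hl
      rcases hcover l with rfl | rfl | rfl
      · exact Or.inl (le_refl _)
      · exact absurd rfl hl
      · exact Or.inr (le_refl _)
    -- step 1 : b = a + 1
    have hb1 : b = a + 1 := by
      by_contra hbne
      have hb2 : a + 2 ≤ b := by omega
      set v' : Fin n := ⟨b - 1, by omega⟩ with hv'
      set s' := Function.update s i v' with hs'
      have hsi : (s' i : ℕ) = b - 1 := by rw [hs', Function.update_self]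
      have hsj : s' j = s j := Function.update_of_ne (Ne.symm hij) _ s
      have hsk : s' k = s k := Function.update_of_ne (Ne.symm hik) _ s
      have hinj : Function.Injective s' := by
        apply inj3 hij hjk hik
        · rw [hsi, hsj]; omega
        · rw [hsj, hsk]; omega
      have hval : utility (pathGraph n) (fun _ => (1:ℤ)) s' i
          = ((((b-1) + b + 1)/2 : ℕ) : ℤ) := by
        have := util_left s' hinj (by norm_num) i j (Ne.symm hij)
          (by intro l hl
              rcases hcover l with rfl | rfl | rfl
              · exact absurd rfl hl
              · rw [hsi, hsj]; omega
              · rw [hsi, hsk]; omega)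
          (by intro l hl
              rcases hcover l with rfl | rfl | rfl
              · exact absurd rfl hl
              · exact le_refl _
              · rw [hsj, hsk]; omega)
        rw [this, hsi, hsj]
      have hle := hN i v'
      rw [← hs', hval, hui] at hle
      have : ((b-1) + b + 1)/2 ≤ (a + b + 1)/2 := by exact_mod_cast hle
      omega
    -- step 2 : c = b + 1
    have hc1 : c = b + 1 := by
      by_contra hcne
      have hc2 : b + 2 ≤ c := by omega
      set v' : Fin n := ⟨b + 1, by omega⟩ with hv'
      set s' := Function.update s k v' with hs'
      have hsk' : (s' k : ℕ) = b + 1 := by rw [hs', Function.update_self]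
      have hsi' : s' i = s i := Function.update_of_ne hik _ s
      have hsj' : s' j = s j := Function.update_of_ne hjk _ s
      have hinj : Function.Injective s' := by
        apply inj3 hij hjk hik
        · rw [hsi', hsj']; omega
        · rw [hsj', hsk']; omega
      have huk : utility (pathGraph n) (fun _ => (1:ℤ)) s k
          = ((n - (b + c)/2 - 1 : ℕ) : ℤ) := by
        apply util_right s hs (by norm_num) k j hjk
        · intro l hl
          rcases hcover l with rfl | rfl | rfl
          · omega
          · exact hbc
          · exact absurd rfl hl
        · intro l hl
          rcases hcover l with rfl | rfl | rfl
          · omega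
          · exact le_refl _
          · exact absurd rfl hl
      have hval : utility (pathGraph n) (fun _ => (1:ℤ)) s' k
          = ((n - (b + (b+1))/2 - 1 : ℕ) : ℤ) := by
        have := util_right s' hinj (by norm_num) k j hjk
          (by intro l hl
              rcases hcover l with rfl | rfl | rfl
              · rw [hsi', hsk']; omega
              · rw [hsj', hsk']; omega
              · exact absurd rfl hl)
          (by intro l hl
              rcases hcover l with rfl | rfl | rfl
              · rw [hsi', hsj']; omega
              · exact le_refl _
              · exact absurd rfl hl)
        rw [this, hsj', hsk']
      have hle := hN k v'
      rw [← hs', hval, huk] at hle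
      have : n - (b + (b+1))/2 - 1 ≤ n - (b + c)/2 - 1 := by exact_mod_cast hle
      omega
    -- now the middle player has utility 1 and some side is long
    have hujval : utility (pathGraph n) (fun _ => (1:ℤ)) s j = ((1 : ℕ) : ℤ) := by
      rw [huj]; congr 1; omega
    rcases (by omega : 2 ≤ a ∨ c + 3 ≤ n) with hside | hside
    · -- move j to a - 1
      set v' : Fin n := ⟨a - 1, by omega⟩ with hv'
      set s' := Function.update s j v' with hs'
      have hsj : (s' j : ℕ) = a - 1 := by rw [hs', Function.update_self]
      have hsi : s' i = s i := Function.update_of_ne hij _ s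
      have hsk : s' k = s k := Function.update_of_ne (Ne.symm hjk) _ s
      have hinj : Function.Injective s' := by
        apply inj3 (Ne.symm hij) hik hjk
        · rw [hsi, hsj]; omega
        · rw [hsi, hsk]; omega
      have hval : utility (pathGraph n) (fun _ => (1:ℤ)) s' j
          = ((((a-1) + a + 1)/2 : ℕ) : ℤ) := by
        have := util_left s' hinj (by norm_num) j i hij
          (by intro l hl
              rcases hcover l with rfl | rfl | rfl
              · rw [hsi, hsj]; omega
              · exact absurd rfl hl
              · rw [hsj, hsk]; omega)
          (by intro l hl
              rcases hcover l with rfl | rfl | rfl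
              · exact le_refl _
              · exact absurd rfl hl
              · rw [hsi, hsk]; omega)
        rw [this, hsi, hsj]
      have hle := hN j v'
      rw [← hs', hval, hujval] at hle
      have : ((a-1) + a + 1)/2 ≤ 1 := by exact_mod_cast hle
      omega
    · -- move j to c + 1
      set v' : Fin n := ⟨c + 1, by omega⟩ with hv'
      set s' := Function.update s j v' with hs'
      have hsj : (s' j : ℕ) = c + 1 := by rw [hs', Function.update_self]
      have hsi : s' i = s i := Function.update_of_ne hij _ s
      have hsk : s' k = s k := Function.update_of_ne (Ne.symm hjk) _ s
      have hinj : Function.Injective s' := by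
        apply inj3 hik (Ne.symm hjk) hij
        · rw [hsi, hsk]; omega
        · rw [hsk, hsj]; omega
      have hval : utility (pathGraph n) (fun _ => (1:ℤ)) s' j
          = ((n - (c + (c+1))/2 - 1 : ℕ) : ℤ) := by
        have := util_right s' hinj (by norm_num) j k (Ne.symm hjk)
          (by intro l hl
              rcases hcover l with rfl | rfl | rfl
              · rw [hsi, hsj]; omega
              · exact absurd rfl hl
              · rw [hsk, hsj]; omega)
          (by intro l hl
              rcases hcover l with rfl | rfl | rfl
              · rw [hsi, hsk]; omega
              · exact absurd rfl hl
              · exact le_refl _)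
        rw [this, hsk, hsj]
      have hle := hN j v'
      rw [← hs', hval, hujval] at hle
      have : n - (c + (c+1))/2 - 1 ≤ 1 := by exact_mod_cast hle
      omega


def uD (s : Fin k → Fin n) (i : Fin k) : ℕ :=
  if ∃ j, j ≠ i ∧ s j = s i then 0
  else (Finset.univ.filter
    (fun v : Fin n => ∀ j, j ≠ i → Nat.dist (v:ℕ) (s i:ℕ) < Nat.dist (v:ℕ) (s j:ℕ))).card

lemma utility_eq_uD (hk : 0 < k) (s : Fin k → Fin n) (i : Fin k)
    (hothers : ∀ j l, j ≠ i → l ≠ i → j ≠ l → s j ≠ s l) :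
    utility (pathGraph n) (fun _ => (1:ℤ)) s i = (uD s i : ℤ) := by
  unfold uD
  split
  case isTrue h =>
    obtain ⟨j, hj, hcol⟩ := h
    rw [collide_utility _ s i j (Ne.symm hj) hcol.symm]
    simp
  case isFalse h =>
    push_neg at h
    have hs : Function.Injective s := by
      intro x y hxy
      by_contra hne
      by_cases hx : x = i
      · subst hx
        exact h y (fun hyi => hne hyi.symm) hxy.symm
      · by_cases hy : y = i
        · subst hy
          exact h x hx hxy
        · exact hothers x y hx hy hne hxy
    rw [utility_eq_card, ucard_eq s hs hk]

lemma admits_of (n : ℕ) (s : Fin 3 → Fin n) (hs : Function.Injective s)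
    (hNash : ∀ (i : Fin 3) (v' : Fin n), uD (Function.update s i v') i ≤ uD s i)
    (hnu : ∀ v : Fin n, uD (Fin.snoc s v) (Fin.last 3) ≤ 1)
    (hmu : ∀ i : Fin 3, 1 ≤ uD s i) : pathAdmits n 3 1 := by
  have hoth : ∀ j l : Fin 3, j ≠ l → s j ≠ s l := fun j l hjl h => hjl (hs h)
  refine ⟨s, ?_, ?_, ?_⟩
  · intro i v'
    rw [utility_eq_uD (by norm_num) s i (fun j l _ _ hjl => hoth j l hjl),
        utility_eq_uD (by norm_num) (Function.update s i v') i ?_]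
    · exact_mod_cast hNash i v'
    · intro j l hj hl hjl
      rw [Function.update_of_ne hj, Function.update_of_ne hl]
      exact hoth j l hjl
  · intro v
    rw [utility_eq_uD (by norm_num) (Fin.snoc s v) (Fin.last 3) ?_]
    · exact_mod_cast hnu v
    · intro j l hj hl hjl
      obtain ⟨j', rfl⟩ := Fin.exists_castSucc_eq.mpr hj
      obtain ⟨l', rfl⟩ := Fin.exists_castSucc_eq.mpr hl
      rw [Fin.snoc_castSucc, Fin.snoc_castSucc]
      exact hoth j' l' (fun h => hjl (by rw [h]))
  · intro i
    rw [utility_eq_uD (by norm_num) s i (fun j l _ _ hjl => hoth j l hjl)]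
    exact_mod_cast hmu i

end P3

/-- the unweighted path on `n` vertices admits `κ = 3` players with
positive boundary `t` if and only if `t = 1` and `n ∈ {3, 4, 5}`. -/
theorem path_admits_three_iff (n t : ℕ) (ht : 1 ≤ t) :
    pathAdmits n 3 t ↔ t = 1 ∧ (n = 3 ∨ n = 4 ∨ n = 5) := by
  constructor
  · rintro ⟨s, hN, hnu, hmu⟩
    have hsum := P3.sum_utility_le (pathGraph n) s
    rw [Fintype.card_fin] at hsum
    have hts : (3 * (t:ℤ)) ≤ ∑ i : Fin 3, utility (pathGraph n) (fun _ => (1:ℤ)) s i := by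
      calc (3 * (t:ℤ)) = ∑ _i : Fin 3, (t:ℤ) := by
            rw [Finset.sum_const, Finset.card_univ, Fintype.card_fin]
            ring
        _ ≤ _ := Finset.sum_le_sum (fun i _ => hmu i)
    have h3t : 3 * t ≤ n := by exact_mod_cast hts.trans hsum
    have hn6 : n < 6 := by
      by_contra h
      push_neg at h
      exact P3.no_nash h s hN
    exact ⟨by omega, by omega⟩
  · rintro ⟨rfl, rfl | rfl | rfl⟩
    · exact P3.admits_of 3 ![0, 1, 2] (by decide) (by decide) (by decide) (by decide)
    · exact P3.admits_of 4 ![0, 1, 2] (by decide) (by decide) (by decide) (by decide)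
    · exact P3.admits_of 5 ![1, 2, 3] (by decide) (by decide) (by decide) (by decide)
end
end

section
/- With G_S as in the series-parallel construction (path A with weights 2α,1,1,2α; 2n five-cycles with weights s_j,0,α,α,0 attached to hubs b', b'' of weight α each), if the competitive diffusion game (2n+4, G_S, w_S) has a pure Nash equilibrium, then there exists S' ⊆ [2n] with Σ_{j∈S'} s_j = Σ_{j∈[2n]∖S'} s_j = α, where 2α = Σ_{j=1}^{2n} s_j. -/
/-!
In an equilibrium every player earns at least `α`: the other `2n + 3` players cannot occupy
all `4n + 2` vertices of weight `α`. So no vertex is seeded twice. The two ends of the path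
`A` are not both seeded: a third player on `A` would be trapped on a vertex of weight `1`,
and otherwise the player at `a_1` gains by moving to `a_3`. Moving to a free end, every
player therefore earns at least `2α`, which leaves room for at most two players on `A`.
The other `2n + 2` players share the rest of the graph, of weight `(4n + 4)α`, so each earns
exactly `2α` and together they dominate every `b_{j,1}`. The one dominating `b_{1,1}` owns
`s_j` for a set of indices `j` and `α` for each of its vertices of weight `α`. Owning two of
the latter it would earn more than `2α`; owning none, it could not leave its five-cycle (every
path out passes through a hub) and would earn `s_1 < 2α`. So it owns exactly one, and its `s_j`
sum to `α`.
-/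

open Classical

noncomputable section

/-- Vertices of the series-parallel graph `G_S`: the 4-path `A` (left), the `2n`
five-cycles (pairs `(j, r)` with `r = 0, …, 4` standing for `b_{j,1}, …, b_{j,5}`),
and the two hubs `b' = false`, `b'' = true`. -/
abbrev VGS (n : ℕ) := Fin 4 ⊕ ((Fin (2 * n) × Fin 5) ⊕ Bool)

/-- Generating relation for `G_S`: the path `a_1a_2a_3a_4`, the five-cycles, `b'`
adjacent to every `b_{j,2}`, and `b''` adjacent to every `b_{j,5}`. -/
def relGS (n : ℕ) : VGS n → VGS n → Prop := fun x y =>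
  match x, y with
  | Sum.inl i, Sum.inl i' => (i : ℕ) + 1 = (i' : ℕ)
  | Sum.inr (Sum.inl (j, r)), Sum.inr (Sum.inl (j', r')) =>
      j = j' ∧ ((r : ℕ) + 1) % 5 = (r' : ℕ)
  | Sum.inr (Sum.inr false), Sum.inr (Sum.inl (_, r)) => (r : ℕ) = 1
  | Sum.inr (Sum.inr true), Sum.inr (Sum.inl (_, r)) => (r : ℕ) = 4
  | _, _ => False

/-- The series-parallel graph `G_S`. -/
def GGS (n : ℕ) : SimpleGraph (VGS n) := SimpleGraph.fromRel (relGS n)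

/-- The weights of `G_S`: `2α, 1, 1, 2α` on the path, `s_j, 0, α, α, 0` on the
`j`-th five-cycle, and `α` on each of `b'`, `b''`. -/
def wGS (n : ℕ) (S : Fin (2 * n) → ℤ) (α : ℤ) : VGS n → ℤ := fun v =>
  match v with
  | Sum.inl i => if (i : ℕ) = 0 ∨ (i : ℕ) = 3 then 2 * α else 1
  | Sum.inr (Sum.inl (j, r)) =>
      if (r : ℕ) = 0 then S j else if (r : ℕ) = 2 ∨ (r : ℕ) = 3 then α else 0
  | Sum.inr (Sum.inr _) => α

open Finset

section Diffusion

variable {V : Type*} {k : ℕ} {G : SimpleGraph V} {s : Fin k → V}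

variable (G s) in
def labelAt (t : ℕ) : V → Option (Option (Fin k)) :=
  (fun L v => stepLabel G L v)^[t] (initLabel s)

theorem labelAt_zero : labelAt G s 0 = initLabel s := rfl

theorem labelAt_succ (t : ℕ) (v : V) :
    labelAt G s (t + 1) v = stepLabel G (labelAt G s t) v := by
  simp only [labelAt, Function.iterate_succ_apply']

theorem initLabel_of_forall_eq_iff {v : V} {i : Fin k} (hv : ∀ j, s j = v ↔ j = i) :
    initLabel s v = some (some i) := by
  have h : ∃! j, s j = v := ⟨i, (hv i).2 rfl, fun j hj => (hv j).1 hj⟩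
  rw [initLabel, dif_pos h, (hv _).1 h.choose_spec.1]

theorem initLabel_of_forall_ne {v : V} (hv : ∀ j, s j ≠ v) : initLabel s v = none := by
  rw [initLabel, dif_neg fun ⟨j, hj, _⟩ => hv j hj, dif_neg fun ⟨j, hj⟩ => hv j hj]

theorem initLabel_of_seed_eq {i j : Fin k} (hij : i ≠ j) (h : s i = s j) :
    initLabel s (s i) = some none := by
  rw [initLabel, dif_neg fun ⟨m, _, hm⟩ => hij ((hm i rfl).trans (hm j h.symm).symm),
    dif_pos ⟨i, rfl⟩]

theorem initLabel_ne_none {v : V} (hv : ∃ j, s j = v) : initLabel s v ≠ none := by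
  unfold initLabel
  split_ifs <;> simp

theorem eq_of_initLabel_eq {v : V} {i : Fin k} (h : initLabel s v = some (some i)) :
    s i = v := by
  unfold initLabel at h
  split_ifs at h with h1
  · cases h
    exact h1.choose_spec.1
  · simp at h

theorem stepLabel_of_ne_none {L : V → Option (Option (Fin k))} {v : V} (hv : L v ≠ none) :
    stepLabel G L v = L v := by
  obtain ⟨x, hx⟩ := Option.ne_none_iff_exists'.1 hv
  simp only [stepLabel, hx]

theorem stepLabel_of_adj_eq {L : V → Option (Option (Fin k))} {u v : V} {j : Fin k}
    (hv : L v = none) (hadj : G.Adj u v) (hu : L u = some (some j)) :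
    stepLabel G L v = some (some j) ∨ stepLabel G L v = some none := by
  simp only [stepLabel, hv]
  split_ifs with h1 h2
  · exact Or.inl (congrArg (some ∘ some) (h1.unique h1.choose_spec.1 ⟨u, hadj, hu⟩))
  · exact Or.inr rfl
  · exact absurd ⟨j, u, hadj, hu⟩ h2

theorem stepLabel_of_forall_adj {L : V → Option (Option (Fin k))} {u v : V} {j : Fin k}
    (hv : L v = none) (hadj : G.Adj u v) (hu : L u = some (some j))
    (hj : ∀ x i, G.Adj x v → L x = some (some i) → i = j) :
    stepLabel G L v = some (some j) := by
  have h : ∃! i, ∃ x, G.Adj x v ∧ L x = some (some i) :=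
    ⟨j, ⟨u, hadj, hu⟩, fun i ⟨x, hx, hxi⟩ => hj x i hx hxi⟩
  simp only [stepLabel, hv, dif_pos h]
  obtain ⟨x, hx, hxi⟩ := h.choose_spec.1
  rw [hj x _ hx hxi]

theorem stepLabel_of_forall_not_adj {L : V → Option (Option (Fin k))} {v : V}
    (hv : L v = none) (h : ∀ x i, G.Adj x v → L x ≠ some (some i)) :
    stepLabel G L v = none := by
  simp only [stepLabel, hv]
  rw [dif_neg fun ⟨i, ⟨x, hx, hxi⟩, _⟩ => h x i hx hxi,
    dif_neg fun ⟨i, x, hx, hxi⟩ => h x i hx hxi]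

theorem labelAt_add_of_ne_none {t : ℕ} {v : V} (hv : labelAt G s t v ≠ none) (m : ℕ) :
    labelAt G s (t + m) v = labelAt G s t v := by
  induction m with
  | zero => rfl
  | succ m ih =>
    rw [← add_assoc, labelAt_succ, stepLabel_of_ne_none (ih ▸ hv), ih]

theorem labelAt_eq_of_le {t t' : ℕ} {v : V} {x : Option (Fin k)} (htt' : t ≤ t')
    (hv : labelAt G s t v = some x) : labelAt G s t' v = some x := by
  obtain ⟨m, rfl⟩ := Nat.exists_eq_add_of_le htt'
  rw [labelAt_add_of_ne_none (by simp [hv])]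
  exact hv

theorem finalLabel_of_labelAt [Fintype V] {t : ℕ} {v : V} {x : Option (Fin k)}
    (ht : t ≤ Fintype.card V) (hv : labelAt G s t v = some x) : finalLabel G s v = some x :=
  labelAt_eq_of_le ht hv

theorem exists_walk_of_labelAt {t : ℕ} {v : V} {i : Fin k}
    (h : labelAt G s t v = some (some i)) :
    ∃ p : G.Walk (s i) v, ∀ u ∈ p.support, labelAt G s t u = some (some i) := by
  induction t generalizing v with
  | zero =>
    obtain rfl := eq_of_initLabel_eq h
    exact ⟨.nil, by simpa using h⟩
  | succ t ih =>
    have persist (u : V) (hu : labelAt G s t u = some (some i)) :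
        labelAt G s (t + 1) u = some (some i) :=
      labelAt_eq_of_le t.le_succ hu
    by_cases hv : labelAt G s t v = none
    · obtain ⟨u, hadj, hu⟩ : ∃ u, G.Adj u v ∧ labelAt G s t u = some (some i) := by
        rw [labelAt_succ] at h
        simp only [stepLabel, hv] at h
        split_ifs at h with h1 <;> cases h
        exact h1.choose_spec.1
      obtain ⟨p, hp⟩ := ih hu
      refine ⟨p.concat hadj, fun x hx => ?_⟩
      rw [SimpleGraph.Walk.support_concat, List.mem_append, List.mem_singleton] at hx
      rcases hx with hx | rfl
      · exact persist x (hp x hx)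
      · exact h
    · rw [labelAt_succ, stepLabel_of_ne_none hv] at h
      obtain ⟨p, hp⟩ := ih h
      exact ⟨p, fun u hu => persist u (hp u hu)⟩

theorem labelAt_one_of_adj {u v : V} {p : Fin k} (hv : ∀ j, s j ≠ v) (hadj : G.Adj u v)
    (hu : ∀ j, s j = u ↔ j = p) (hnbr : ∀ x, G.Adj x v → x = u ∨ ∀ j, s j ≠ x) :
    labelAt G s 1 v = some (some p) := by
  refine (labelAt_succ 0 v).trans (stepLabel_of_forall_adj (initLabel_of_forall_ne hv) hadj
    (initLabel_of_forall_eq_iff hu) fun x i hx hxi => ?_)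
  rcases hnbr x hx with rfl | hx
  · exact (hu i).1 (eq_of_initLabel_eq hxi)
  · rw [labelAt_zero, initLabel_of_forall_ne hx] at hxi
    cases hxi

theorem labelAt_add_two_of_pendant {t : ℕ} {u v : V} {p : Fin k}
    (hpend : ∀ x, G.Adj x v → x = u) (hadj : G.Adj u v) (hv : labelAt G s t v = none)
    (hu : labelAt G s (t + 1) u = some (some p)) : labelAt G s (t + 2) v = some (some p) := by
  have only_u (L : V → Option (Option (Fin k))) (x : V) (i : Fin k) (hx : G.Adj x v)
      (hxi : L x = some (some i)) : L u = some (some i) := hpend x hx ▸ hxi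
  by_cases hut : labelAt G s t u = none
  · have hv1 : labelAt G s (t + 1) v = none :=
      (labelAt_succ t v).trans <| stepLabel_of_forall_not_adj hv fun x i hx hxi => by
        simp [only_u _ x i hx hxi] at hut
    refine (labelAt_succ (t + 1) v).trans (stepLabel_of_forall_adj hv1 hadj hu fun x i hx hxi => ?_)
    simpa using (only_u _ x i hx hxi).symm.trans hu
  · have hut' : labelAt G s t u = some (some p) := (labelAt_add_of_ne_none hut 1).symm.trans hu
    refine labelAt_eq_of_le (t + 1).le_succ ((labelAt_succ t v).trans
      (stepLabel_of_forall_adj hv hadj hut' fun x i hx hxi => ?_))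
    simpa using (only_u _ x i hx hxi).symm.trans hut'

end Diffusion

section Game

variable {V : Type*} [Fintype V] {k : ℕ} {G : SimpleGraph V} {s : Fin k → V} {w : V → ℤ}

theorem finalLabel_of_forall_eq_iff {v : V} {i : Fin k} (hv : ∀ j, s j = v ↔ j = i) :
    finalLabel G s v = some (some i) :=
  finalLabel_of_labelAt (Nat.zero_le _) (initLabel_of_forall_eq_iff hv)

theorem finalLabel_eq_initLabel {v : V} (hv : ∃ j, s j = v) :
    finalLabel G s v = initLabel s v := by
  obtain ⟨x, hx⟩ := Option.ne_none_iff_exists'.1 (initLabel_ne_none hv)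
  rw [hx]
  exact finalLabel_of_labelAt (Nat.zero_le _) hx

theorem finalLabel_ne_of_exists_eq {v : V} {i : Fin k} (hv : ∃ j, s j = v) (hvi : s i ≠ v) :
    finalLabel G s v ≠ some (some i) := by
  rw [finalLabel_eq_initLabel hv]
  exact fun h => hvi (eq_of_initLabel_eq h)

theorem finalLabel_ne_of_adj {u v : V} {i j : Fin k} (hvi : s i ≠ v) (hadj : G.Adj u v)
    (hu : ∀ x, s x = u ↔ x = j) (hij : i ≠ j) : finalLabel G s v ≠ some (some i) := by
  by_cases hv : ∃ x, s x = v
  · exact finalLabel_ne_of_exists_eq hv hvi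
  push Not at hv
  have hV : 1 ≤ Fintype.card V := Fintype.card_pos_iff.2 ⟨v⟩
  rcases stepLabel_of_adj_eq (initLabel_of_forall_ne hv) hadj (initLabel_of_forall_eq_iff hu)
    with h | h <;>
  · rw [finalLabel_of_labelAt (t := 1) hV ((labelAt_succ 0 v).trans h)]
    exact fun h' => hij (by simpa using h'.symm)

variable (G s) in
def territory (i : Fin k) : Finset V := univ.filter fun v => finalLabel G s v = some (some i)

theorem mem_territory {v : V} {i : Fin k} :
    v ∈ territory G s i ↔ finalLabel G s v = some (some i) := by
  simp [territory]

theorem utility_eq_sum_territory (i : Fin k) :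
    utility G w s i = ∑ v ∈ territory G s i, w v := rfl

theorem sum_le_utility (hw : ∀ v, 0 ≤ w v) {i : Fin k} {E : Finset V}
    (hE : E ⊆ territory G s i) : ∑ v ∈ E, w v ≤ utility G w s i :=
  sum_le_sum_of_subset_of_nonneg hE fun v _ _ => hw v

theorem utility_le_sum (hw : ∀ v, 0 ≤ w v) {i : Fin k} {E : Finset V}
    (hE : territory G s i ⊆ E) : utility G w s i ≤ ∑ v ∈ E, w v :=
  sum_le_sum_of_subset_of_nonneg hE fun v _ _ => hw v

theorem sum_utility_le (hw : ∀ v, 0 ≤ w v) {I : Finset (Fin k)} {C : Finset V}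
    (hC : ∀ i ∈ I, territory G s i ⊆ C) :
    ∑ i ∈ I, utility G w s i ≤ ∑ v ∈ C, w v := by
  have hdisj : (I : Set (Fin k)).PairwiseDisjoint (territory G s) :=
    fun i _ j _ hij => disjoint_left.2 fun v hvi hvj => hij <| by
      simpa using (mem_territory.1 hvi).symm.trans (mem_territory.1 hvj)
  simp only [utility_eq_sum_territory, ← sum_biUnion hdisj]
  exact sum_le_sum_of_subset_of_nonneg (biUnion_subset.2 hC) fun v _ _ => hw v

theorem exists_walk_of_mem_territory {v : V} {i : Fin k} (hv : v ∈ territory G s i) :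
    ∃ p : G.Walk (s i) v, ∀ u ∈ p.support, u ∈ territory G s i := by
  obtain ⟨p, hp⟩ := exists_walk_of_labelAt (mem_territory.1 hv)
  exact ⟨p, fun u hu => mem_territory.2 (hp u hu)⟩

theorem territory_eq_empty_of_seed_eq {i j : Fin k} (hij : i ≠ j) (h : s i = s j) :
    territory G s i = ∅ := by
  refine eq_empty_of_forall_notMem fun v hv => ?_
  obtain ⟨p, hp⟩ := exists_walk_of_mem_territory hv
  have hsi := mem_territory.1 (hp _ p.start_mem_support)
  rw [finalLabel_eq_initLabel ⟨i, rfl⟩, initLabel_of_seed_eq hij h] at hsi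
  cases hsi

theorem le_utility_of_isNash [DecidableEq V] (hN : isNash G w s) (hw : ∀ v, 0 ≤ w v)
    {i : Fin k} {v : V} (hv : ∀ j ≠ i, s j ≠ v) : w v ≤ utility G w s i := by
  have hfin : finalLabel G (Function.update s i v) v = some (some i) :=
    finalLabel_of_forall_eq_iff fun j => by
      refine ⟨fun hj => by_contra fun hji => hv j hji ?_, ?_⟩
      · rwa [Function.update_of_ne hji] at hj
      · rintro rfl
        exact Function.update_self _ _ _
  calc w v = ∑ u ∈ {v}, w u := (sum_singleton w v).symm
    _ ≤ utility G w (Function.update s i v) i :=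
      sum_le_utility hw (singleton_subset_iff.2 (mem_territory.2 hfin))
    _ ≤ utility G w s i := hN i v

end Game

theorem exists_forall_ne_of_le_card {V : Type*} {k : ℕ} (s : Fin k → V) (F : Finset V)
    (hF : k ≤ #F) (i : Fin k) : ∃ v ∈ F, ∀ j ≠ i, s j ≠ v := by
  by_contra! h
  have hsub : F ⊆ (univ.erase i).image s := fun v hv => by
    obtain ⟨j, hji, rfl⟩ := h v hv
    exact mem_image_of_mem s (mem_erase.2 ⟨hji, mem_univ j⟩)
  have := (card_le_card hsub).trans card_image_le
  rw [card_erase_of_mem (mem_univ i), card_univ, Fintype.card_fin] at this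
  have := i.pos
  omega

section SeriesParallel

-- The path vertex `a_{t+1}` is `Sum.inl t`.

variable {n : ℕ}

theorem GGS_adj_iff {u v : VGS n} :
    (GGS n).Adj u v ↔ u ≠ v ∧ (relGS n u v ∨ relGS n v u) :=
  SimpleGraph.fromRel_adj _ u v

theorem adj_inl_zero_iff (u : VGS n) : (GGS n).Adj u (Sum.inl 0) ↔ u = Sum.inl 1 := by
  rw [GGS_adj_iff]
  constructor
  · rintro ⟨-, h | h⟩ <;> rcases u with i | (⟨j, r⟩ | b) <;> simp [relGS] at h ⊢
    omega
  · rintro rfl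
    simp [relGS]

theorem adj_inl_one_iff (u : VGS n) :
    (GGS n).Adj u (Sum.inl 1) ↔ u = Sum.inl 0 ∨ u = Sum.inl 2 := by
  rw [GGS_adj_iff]
  constructor
  · rintro ⟨-, h | h⟩ <;> rcases u with i | (⟨j, r⟩ | b) <;> simp [relGS] at h ⊢ <;>
      omega
  · rintro (rfl | rfl) <;> simp [relGS]

theorem adj_inl_three_inl_two : (GGS n).Adj (Sum.inl 3) (Sum.inl 2) := by
  simp [GGS_adj_iff, relGS]

theorem isLeft_eq_of_adj {u v : VGS n} (h : (GGS n).Adj u v) : u.isLeft = v.isLeft := by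
  rw [GGS_adj_iff] at h
  obtain ⟨-, h | h⟩ := h <;>
    rcases u with i | (⟨j, r⟩ | b) <;> rcases v with i' | (⟨j', r'⟩ | b') <;>
      simp [relGS] at h ⊢

theorem isLeft_eq_of_walk {u v : VGS n} (p : (GGS n).Walk u v) : u.isLeft = v.isLeft := by
  induction p with
  | nil => rfl
  | cons h _ ih => exact (isLeft_eq_of_adj h).trans ih

theorem isLeft_eq_of_mem_territory {k : ℕ} {s : Fin k → VGS n} {i : Fin k} {v : VGS n}
    (hv : v ∈ territory (GGS n) s i) : v.isLeft = (s i).isLeft := by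
  obtain ⟨p, -⟩ := exists_walk_of_mem_territory hv
  exact (isLeft_eq_of_walk p).symm

theorem adj_cycle_vertex {j : Fin (2 * n)} {r : Fin 5} {u : VGS n}
    (h : (GGS n).Adj (Sum.inr (Sum.inl (j, r))) u) :
    (∃ r', u = Sum.inr (Sum.inl (j, r'))) ∨ ∃ b, u = Sum.inr (Sum.inr b) := by
  rw [GGS_adj_iff] at h
  obtain ⟨-, h | h⟩ := h <;> rcases u with i | (⟨j', r'⟩ | b)
  · simp [relGS] at h
  · exact .inl ⟨r', by rw [h.1]⟩
  · cases b <;> simp [relGS] at h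
  · simp [relGS] at h
  · exact .inl ⟨r', by rw [h.1]⟩
  · exact .inr ⟨b, rfl⟩

theorem exists_hub_mem_support {j : Fin (2 * n)} {u v : VGS n} (p : (GGS n).Walk u v)
    (hu : ∃ r, u = Sum.inr (Sum.inl (j, r))) (hv : ∀ r, v ≠ Sum.inr (Sum.inl (j, r))) :
    ∃ b, Sum.inr (Sum.inr b) ∈ p.support := by
  induction p with
  | nil =>
    obtain ⟨r, rfl⟩ := hu
    exact absurd rfl (hv r)
  | cons hadj p ih =>
    obtain ⟨r, rfl⟩ := hu
    rcases adj_cycle_vertex hadj with ⟨r', rfl⟩ | ⟨b, rfl⟩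
    · obtain ⟨b, hb⟩ := ih ⟨r', rfl⟩ hv
      exact ⟨b, List.mem_cons_of_mem _ hb⟩
    · exact ⟨b, by simp⟩

variable {S : Fin (2 * n) → ℤ} {α : ℤ}

theorem wGS_nonneg (hα : 0 ≤ α) (hpos : ∀ j, 0 < S j) (v : VGS n) : 0 ≤ wGS n S α v := by
  rcases v with i | (⟨j, r⟩ | b)
  · simp only [wGS]
    split_ifs <;> omega
  · have := hpos j
    simp only [wGS]
    split_ifs <;> omega
  · exact hα

def IsAlphaVertex : VGS n → Prop
  | Sum.inr (Sum.inl (_, r)) => r = 2 ∨ r = 3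
  | Sum.inr (Sum.inr _) => True
  | Sum.inl _ => False

theorem wGS_of_isAlphaVertex {v : VGS n} (hv : IsAlphaVertex v) : wGS n S α v = α := by
  rcases v with i | (⟨j, r⟩ | b)
  · exact hv.elim
  · rcases hv with rfl | rfl <;> rfl
  · rfl

theorem card_filter_isAlphaVertex : #(univ.filter (IsAlphaVertex (n := n))) = 4 * n + 2 := by
  rw [card_filter, Fintype.sum_sum_type, Fintype.sum_sum_type, Fintype.sum_prod_type]
  simp [IsAlphaVertex, Fin.sum_univ_five]
  ring

theorem sum_wGS_isLeft :
    ∑ v ∈ univ.filter (fun v : VGS n => v.isLeft), wGS n S α v = 4 * α + 2 := by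
  rw [sum_filter, Fintype.sum_sum_type]
  simp [Fin.sum_univ_four, wGS]
  ring

theorem sum_wGS_isRight (hsum : ∑ j, S j = 2 * α) :
    ∑ v ∈ univ.filter (fun v : VGS n => v.isRight), wGS n S α v = (4 * n + 4) * α := by
  rw [sum_filter, Fintype.sum_sum_type, Fintype.sum_sum_type, Fintype.sum_prod_type]
  simp [Fin.sum_univ_five, wGS, sum_add_distrib, hsum]
  ring

theorem sum_wGS_of_forall_isRight {D : Finset (VGS n)} (hD : ∀ v ∈ D, v.isRight) :
    ∑ v ∈ D, wGS n S α v = #(D.filter IsAlphaVertex) * α +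
      ∑ j ∈ univ.filter (fun j => Sum.inr (Sum.inl (j, 0)) ∈ D), S j := by
  rw [← sum_filter_add_sum_filter_not D IsAlphaVertex]
  congr 1
  · rw [sum_congr rfl fun v hv => wGS_of_isAlphaVertex (mem_filter.1 hv).2, sum_const,
      nsmul_eq_mul]
  · change _ = ∑ j ∈ _, wGS n S α (Sum.inr (Sum.inl (j, 0)))
    rw [← sum_image (g := fun j => (Sum.inr (Sum.inl (j, 0)) : VGS n)) (by simp)]
    refine (sum_subset (fun v hv => ?_) fun v hv hv' => ?_).symm
    · obtain ⟨j, hj, rfl⟩ := mem_image.1 hv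
      exact mem_filter.2 ⟨(mem_filter.1 hj).2, by simp [IsAlphaVertex]⟩
    · obtain ⟨hvD, hvα⟩ := mem_filter.1 hv
      rcases v with i | (⟨j, r⟩ | b)
      · simpa using hD _ hvD
      · fin_cases r
        · exact absurd (mem_image.2 ⟨j, by simpa using hvD, rfl⟩) hv'
        · rfl
        · exact absurd (.inl rfl) hvα
        · exact absurd (.inr rfl) hvα
        · rfl
      · exact absurd trivial hvα

section Players

variable {k : ℕ} {s : Fin k → VGS n}

theorem seed_eq_or_of_inl_mem_territory (hinj : Function.Injective s) {p q i : Fin k}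
    {t : Fin 4} (hp : s p = Sum.inl 0) (hq : s q = Sum.inl 3)
    (hv : Sum.inl t ∈ territory (GGS n) s i) :
    s i = Sum.inl t ∨ (t = 1 ∧ i = p) ∨ (t = 2 ∧ i = q) := by
  have hfin := mem_territory.1 hv
  by_contra! h
  obtain ⟨hne, h1, h2⟩ := h
  fin_cases t
  · exact finalLabel_ne_of_exists_eq ⟨p, hp⟩ hne hfin
  · exact finalLabel_ne_of_adj hne ((adj_inl_one_iff _).2 (.inl rfl))
      (fun x => hinj.eq_iff' hp) (h1 rfl) hfin
  · exact finalLabel_ne_of_adj hne adj_inl_three_inl_two (fun x => hinj.eq_iff' hq) (h2 rfl) hfin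
  · exact finalLabel_ne_of_exists_eq ⟨q, hq⟩ hne hfin

theorem utility_le_one_of_seed_between (hw : ∀ v, 0 ≤ wGS n S α v)
    (hinj : Function.Injective s) {p q r : Fin k} (hp : s p = Sum.inl 0)
    (hq : s q = Sum.inl 3) (hr : s r = Sum.inl 1 ∨ s r = Sum.inl 2) :
    utility (GGS n) (wGS n S α) s r ≤ 1 := by
  have hsub : territory (GGS n) s r ⊆ {s r} := fun v hv => by
    obtain ⟨t, rfl⟩ := Sum.isLeft_iff.1
      ((isLeft_eq_of_mem_territory hv).trans (by rcases hr with hr | hr <;> simp [hr]))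
    rcases seed_eq_or_of_inl_mem_territory hinj hp hq hv with h | ⟨-, rfl⟩ | ⟨-, rfl⟩
    · exact mem_singleton.2 h.symm
    · rcases hr with hr | hr <;> simp [hr] at hp
    · rcases hr with hr | hr <;> simp [hr] at hq
  calc utility (GGS n) (wGS n S α) s r ≤ ∑ v ∈ {s r}, wGS n S α v := utility_le_sum hw hsub
    _ = 1 := by rcases hr with hr | hr <;> simp [hr, wGS]

theorem utility_le_of_seed_eq_inl_zero (hw : ∀ v, 0 ≤ wGS n S α v)
    (hinj : Function.Injective s) {p q : Fin k} (hp : s p = Sum.inl 0)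
    (hq : s q = Sum.inl 3) : utility (GGS n) (wGS n S α) s p ≤ 2 * α + 1 := by
  have hsub : territory (GGS n) s p ⊆ {Sum.inl 0, Sum.inl 1} := fun v hv => by
    obtain ⟨t, rfl⟩ := Sum.isLeft_iff.1 ((isLeft_eq_of_mem_territory hv).trans (by simp [hp]))
    rcases seed_eq_or_of_inl_mem_territory hinj hp hq hv with h | ⟨rfl, -⟩ | ⟨-, h⟩
    · simp [← hp.symm.trans h]
    · simp
    · simp [h, hq] at hp
  calc utility (GGS n) (wGS n S α) s p ≤ ∑ v ∈ {Sum.inl 0, Sum.inl 1}, wGS n S α v :=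
        utility_le_sum hw hsub
    _ = 2 * α + 1 := by simp [wGS]

theorem le_utility_update_inl_two (hw : ∀ v, 0 ≤ wGS n S α v) (hinj : Function.Injective s)
    {p : Fin k} (hp : s p = Sum.inl 0) (h1 : ∀ j, s j ≠ Sum.inl 1)
    (h2 : ∀ j, s j ≠ Sum.inl 2) :
    2 * α + 2 ≤ utility (GGS n) (wGS n S α) (Function.update s p (Sum.inl 2)) p := by
  set s' := Function.update s p (Sum.inl 2)
  have hs' (j : Fin k) (hj : j ≠ p) : s' j = s j := Function.update_of_ne hj _ _
  have h2' (j : Fin k) : s' j = Sum.inl 2 ↔ j = p :=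
    ⟨fun hj => by_contra fun hjp => h2 j ((hs' j hjp).symm.trans hj),
      by rintro rfl; exact Function.update_self _ _ _⟩
  have h1' (j : Fin k) : s' j ≠ Sum.inl 1 := by
    rcases eq_or_ne j p with rfl | hjp
    · simp [s']
    · rw [hs' j hjp]
      exact h1 j
  have h0' (j : Fin k) : s' j ≠ Sum.inl 0 := by
    rcases eq_or_ne j p with rfl | hjp
    · simp [s']
    · rw [hs' j hjp, ← hp]
      exact hinj.ne hjp
  have hL1 : labelAt (GGS n) s' 1 (Sum.inl 1) = some (some p) :=
    labelAt_one_of_adj h1' ((adj_inl_one_iff _).2 (.inr rfl)) h2' fun x hx => by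
      rcases (adj_inl_one_iff x).1 hx with rfl | rfl
      · exact .inr h0'
      · exact .inl rfl
  have hL2 : labelAt (GGS n) s' 2 (Sum.inl 0) = some (some p) :=
    labelAt_add_two_of_pendant (t := 0) (fun x hx => (adj_inl_zero_iff x).1 hx)
      ((adj_inl_zero_iff _).2 rfl) (initLabel_of_forall_ne h0') hL1
  have hcard : 2 ≤ Fintype.card (VGS n) :=
    Fintype.one_lt_card_iff.2 ⟨Sum.inl 0, Sum.inl 1, by simp⟩
  have hsub : {Sum.inl 0, Sum.inl 1, Sum.inl 2} ⊆ territory (GGS n) s' p := by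
    simp only [insert_subset_iff, singleton_subset_iff, mem_territory]
    exact ⟨finalLabel_of_labelAt hcard hL2, finalLabel_of_labelAt (one_le_two.trans hcard) hL1,
      finalLabel_of_forall_eq_iff h2'⟩
  calc 2 * α + 2 = ∑ v ∈ {Sum.inl 0, Sum.inl 1, Sum.inl 2}, wGS n S α v := by simp [wGS]
    _ ≤ _ := sum_le_utility hw hsub

theorem not_seed_eq_inl_zero_and_inl_three (hw : ∀ v, 0 ≤ wGS n S α v) (hα : 2 ≤ α)
    (hN : isNash (GGS n) (wGS n S α) s) (hinj : Function.Injective s)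
    (hαU : ∀ i, α ≤ utility (GGS n) (wGS n S α) s i) :
    ¬((∃ p, s p = Sum.inl 0) ∧ ∃ q, s q = Sum.inl 3) := by
  rintro ⟨⟨p, hp⟩, q, hq⟩
  by_cases hmid : ∃ r, s r = Sum.inl 1 ∨ s r = Sum.inl 2
  · obtain ⟨r, hr⟩ := hmid
    have := utility_le_one_of_seed_between hw hinj hp hq hr
    have := hαU r
    omega
  · push Not at hmid
    have := le_utility_update_inl_two hw hinj hp (fun j => (hmid j).1) fun j => (hmid j).2
    have := utility_le_of_seed_eq_inl_zero hw hinj hp hq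
    have := hN p (Sum.inl 2)
    omega

theorem exists_hub_mem_territory {i : Fin k} {j j' : Fin (2 * n)} {r r' : Fin 5} (hjj' : j ≠ j')
    (hv : Sum.inr (Sum.inl (j, r)) ∈ territory (GGS n) s i)
    (hv' : Sum.inr (Sum.inl (j', r')) ∈ territory (GGS n) s i) :
    ∃ b, Sum.inr (Sum.inr b) ∈ territory (GGS n) s i := by
  obtain ⟨p, hp⟩ := exists_walk_of_mem_territory hv
  obtain ⟨p', hp'⟩ := exists_walk_of_mem_territory hv'
  obtain ⟨b, hb⟩ := exists_hub_mem_support (p.reverse.append p') ⟨r, rfl⟩ fun r'' h =>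
    hjj' (by simp only [Sum.inr.injEq, Sum.inl.injEq, Prod.mk.injEq] at h; exact h.1.symm)
  rw [SimpleGraph.Walk.mem_support_append_iff, SimpleGraph.Walk.support_reverse,
    List.mem_reverse] at hb
  exact ⟨b, hb.elim (hp _) (hp' _)⟩

theorem exists_sum_eq_of_mem_territory (hpos : ∀ j, 0 < S j) (hlt : ∀ j, S j < 2 * α)
    {i : Fin k} {j₀ : Fin (2 * n)} (hi : (s i).isRight)
    (hj₀ : Sum.inr (Sum.inl (j₀, 0)) ∈ territory (GGS n) s i)
    (hU : utility (GGS n) (wGS n S α) s i = 2 * α) :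
    ∃ T : Finset (Fin (2 * n)), ∑ j ∈ T, S j = α := by
  set D := territory (GGS n) s i
  set T := univ.filter fun j => Sum.inr (Sum.inl (j, 0)) ∈ D
  have hdec : 2 * α = #(D.filter IsAlphaVertex) * α + ∑ j ∈ T, S j := by
    rw [← hU, utility_eq_sum_territory]
    exact sum_wGS_of_forall_isRight fun v hv =>
      Sum.not_isLeft.1 ((isLeft_eq_of_mem_territory hv).trans_ne (Sum.not_isLeft.2 hi))
  have hj₀T : j₀ ∈ T := mem_filter.2 ⟨mem_univ _, hj₀⟩
  have hσ : S j₀ ≤ ∑ j ∈ T, S j := single_le_sum (fun j _ => (hpos j).le) hj₀T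
  have hα : 0 < α := by linarith [hpos j₀, hlt j₀]
  obtain h0 | h1 | h2 : #(D.filter IsAlphaVertex) = 0 ∨ #(D.filter IsAlphaVertex) = 1 ∨
      2 ≤ #(D.filter IsAlphaVertex) := by omega
  · have hT : T = {j₀} := by
      refine eq_singleton_iff_unique_mem.2 ⟨hj₀T, fun j hj => by_contra fun hne => ?_⟩
      obtain ⟨b, hb⟩ := exists_hub_mem_territory hne (mem_filter.1 hj).2 hj₀
      have : 0 < #(D.filter IsAlphaVertex) := card_pos.2 ⟨_, mem_filter.2 ⟨hb, trivial⟩⟩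
      omega
    rw [h0, Nat.cast_zero, hT, sum_singleton] at hdec
    linarith [hlt j₀]
  · exact ⟨T, by rw [h1, Nat.cast_one] at hdec; linarith⟩
  · have : 2 * α ≤ #(D.filter IsAlphaVertex) * α :=
      mul_le_mul_of_nonneg_right (by exact_mod_cast h2) hα.le
    linarith [hpos j₀]

end Players

theorem lt_two_mul_of_sum_eq (hn : 1 ≤ n) (hpos : ∀ j, 0 < S j) (hsum : ∑ j, S j = 2 * α)
    (j : Fin (2 * n)) : S j < 2 * α := by
  obtain ⟨j', hj'⟩ := Fintype.exists_ne_of_one_lt_card (by rw [Fintype.card_fin]; omega) j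
  exact hsum ▸ single_lt_sum hj' (mem_univ j) (mem_univ j') (hpos j') fun i _ _ => (hpos i).le

section Equilibrium

variable {s : Fin (2 * n + 4) → VGS n}

theorem alpha_le_utility (hn : 1 ≤ n) (hw : ∀ v, 0 ≤ wGS n S α v)
    (hN : isNash (GGS n) (wGS n S α) s) (i : Fin (2 * n + 4)) :
    α ≤ utility (GGS n) (wGS n S α) s i := by
  obtain ⟨v, hv, hfree⟩ := exists_forall_ne_of_le_card s (univ.filter IsAlphaVertex)
    (by rw [card_filter_isAlphaVertex]; omega) i
  exact (wGS_of_isAlphaVertex (mem_filter.1 hv).2).symm.trans_le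
    (le_utility_of_isNash hN hw hfree)

theorem injective_of_isNash (hn : 1 ≤ n) (hw : ∀ v, 0 ≤ wGS n S α v) (hα : 0 < α)
    (hN : isNash (GGS n) (wGS n S α) s) : Function.Injective s := fun i j h =>
  by_contra fun hij => by
    have := alpha_le_utility hn hw hN i
    rw [utility_eq_sum_territory, territory_eq_empty_of_seed_eq hij h, sum_empty] at this
    omega

theorem two_mul_le_utility (hn : 1 ≤ n) (hw : ∀ v, 0 ≤ wGS n S α v) (hα : 2 ≤ α)
    (hN : isNash (GGS n) (wGS n S α) s) (i : Fin (2 * n + 4)) :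
    2 * α ≤ utility (GGS n) (wGS n S α) s i := by
  have hends := not_seed_eq_inl_zero_and_inl_three hw hα hN
    (injective_of_isNash hn hw (by omega) hN) (alpha_le_utility hn hw hN)
  by_cases h0 : ∃ p, s p = Sum.inl 0
  · have h3 (j : Fin (2 * n + 4)) : s j ≠ Sum.inl 3 := fun hj => hends ⟨h0, j, hj⟩
    simpa [wGS] using le_utility_of_isNash hN hw (i := i) fun j _ => h3 j
  · push Not at h0
    simpa [wGS] using le_utility_of_isNash hN hw (i := i) fun j _ => h0 j

theorem card_filter_isLeft_le_two (hn : 1 ≤ n) (hw : ∀ v, 0 ≤ wGS n S α v) (hα : 2 ≤ α)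
    (hN : isNash (GGS n) (wGS n S α) s) : #(univ.filter fun i => (s i).isLeft) ≤ 2 := by
  set P := univ.filter fun i => (s i).isLeft
  have hle : ∑ i ∈ P, utility (GGS n) (wGS n S α) s i ≤ 4 * α + 2 := by
    rw [← sum_wGS_isLeft]
    exact sum_utility_le hw fun i hi v hv => mem_filter.2
      ⟨mem_univ _, (isLeft_eq_of_mem_territory hv).trans (mem_filter.1 hi).2⟩
  have hge : #P • (2 * α) ≤ ∑ i ∈ P, utility (GGS n) (wGS n S α) s i :=
    card_nsmul_le_sum _ _ _ fun i _ => two_mul_le_utility hn hw hα hN i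
  rw [nsmul_eq_mul] at hge
  by_contra! h
  have : (3 : ℤ) ≤ #P := by exact_mod_cast h
  nlinarith

theorem exists_isRight_mem_territory_utility_eq (hn : 1 ≤ n) (hpos : ∀ j, 0 < S j)
    (hsum : ∑ j, S j = 2 * α) (hα : 2 ≤ α) (hN : isNash (GGS n) (wGS n S α) s)
    (j₀ : Fin (2 * n)) :
    ∃ i, (s i).isRight ∧ Sum.inr (Sum.inl (j₀, 0)) ∈ territory (GGS n) s i ∧
      utility (GGS n) (wGS n S α) s i = 2 * α := by
  have hw := wGS_nonneg (α := α) (by omega) hpos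
  have h2α := two_mul_le_utility hn hw hα hN
  have hR : 2 * n + 2 ≤ #(univ.filter fun i => (s i).isRight) := by
    have := card_filter_add_card_filter_not (s := univ) fun i => (s i).isLeft
    simp only [Sum.not_isLeft, card_univ, Fintype.card_fin] at this
    have := card_filter_isLeft_le_two hn hw hα hN
    omega
  set R := univ.filter fun i => (s i).isRight
  have hside : ∀ i ∈ R, territory (GGS n) s i ⊆ univ.filter fun v => v.isRight :=
    fun i hi v hv => mem_filter.2 ⟨mem_univ _, Sum.not_isLeft.1
      ((isLeft_eq_of_mem_territory hv).trans_ne (Sum.not_isLeft.2 (mem_filter.1 hi).2))⟩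
  have hup := (sum_utility_le hw hside).trans_eq (sum_wGS_isRight hsum)
  have hcap : (4 * n + 4) * α ≤ ∑ i ∈ R, 2 * α := by
    rw [sum_const, nsmul_eq_mul]
    have : (2 * n + 2 : ℤ) ≤ #R := by exact_mod_cast hR
    nlinarith
  have heq : ∀ i ∈ R, 2 * α = utility (GGS n) (wGS n S α) s i :=
    (sum_eq_sum_iff_of_le fun i _ => h2α i).1
      (le_antisymm (sum_le_sum fun i _ => h2α i) (hup.trans hcap))
  obtain ⟨i, hi, hj₀⟩ :
      ∃ i ∈ R, Sum.inr (Sum.inl (j₀, 0)) ∈ territory (GGS n) s i := by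
    by_contra! h
    have hsub : ∀ i ∈ R, territory (GGS n) s i ⊆
        (univ.filter fun v => v.isRight).erase (Sum.inr (Sum.inl (j₀, 0))) :=
      fun i hi v hv => mem_erase.2 ⟨fun hvt => h i hi (hvt ▸ hv), hside i hi hv⟩
    have := sum_utility_le hw hsub
    rw [sum_erase_eq_sub (by simp), sum_wGS_isRight hsum] at this
    have : 0 < wGS n S α (Sum.inr (Sum.inl (j₀, 0))) := hpos j₀
    linarith [sum_le_sum fun i (_ : i ∈ R) => h2α i]
  exact ⟨i, (mem_filter.1 hi).2, hj₀, (heq i hi).symm⟩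

end Equilibrium

end SeriesParallel

/-- if the competitive diffusion game `(2n+4, G_S, w_S)` has a pure
Nash equilibrium, then the positive integers `s_1, …, s_{2n}` (of total sum `2α`)
can be partitioned into two halves each of sum `α`. -/
theorem GS_nash_to_partition (n : ℕ) (S : Fin (2 * n) → ℤ) (α : ℤ)
    (hpos : ∀ j, 0 < S j) (hsum : ∑ j, S j = 2 * α)
    (hnash : ∃ s : Fin (2 * n + 4) → VGS n, isNash (GGS n) (wGS n S α) s) :
    ∃ S' : Finset (Fin (2 * n)), ∑ j ∈ S', S j = α ∧ ∑ j ∈ S'ᶜ, S j = α := by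
  obtain ⟨s, hN⟩ := hnash
  suffices h : ∃ T : Finset (Fin (2 * n)), ∑ j ∈ T, S j = α by
    obtain ⟨T, hT⟩ := h
    exact ⟨T, hT, by linarith [sum_add_sum_compl T S]⟩
  rcases Nat.eq_zero_or_pos n with rfl | hn
  · exact ⟨∅, by simpa [eq_comm] using hsum⟩
  have hlt := lt_two_mul_of_sum_eq hn hpos hsum
  let j₀ : Fin (2 * n) := ⟨0, by omega⟩
  rcases lt_or_ge α 2 with hα | hα
  · refine ⟨{j₀}, ?_⟩
    rw [sum_singleton]
    linarith [hpos j₀, hlt j₀]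
  obtain ⟨i, hi, hj₀, hU⟩ := exists_isRight_mem_territory_utility_eq hn hpos hsum hα hN j₀
  exact exists_sum_eq_of_mem_territory hpos hlt hi hj₀ hU
end
end
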